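/- arXiv:2504.15208 — 4 statements merged into one kernel-verified Lean document; each statement's English description precedes it below -/
import Mathlib

section
/- Let (Ω, 𝓕, (𝓕_k)_{k∈ℕ}, P) be a filtered probability space, let X_1, …, X_n be random variables with X_k 𝓕_k-measurable, and let Y_1, …, Y_n be random variables with Y_k 𝓕_{k−1}-measurable, such that Y_k − X_k > −Δ almost surely for some Δ ≥ 0. Fix t with 0 < t < 1/Δ and ε ∈ (0,1). Set B_n = (1/n)∑_{k=1}^n (E[X_k | 𝓕_{k−1}] − X_k), C_n = (1/n)log(1/ε), and A_k = Y_k − X_k. Then with probability at least 1 − ε, simultaneously for all n ≥ 1: t·B_n ≤ C_n + (1/n)∑_{k=1}^n v(t·A_k). -/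
open MeasureTheory

/-- `v x = x - log (1 + x)`, the function from the paper's concentration inequalities. -/
noncomputable def v (x : ℝ) : ℝ := x - Real.log (1 + x)

/-- On a filtered probability space, with `X k` being `ℱ k`-measurable and
integrable, `Y k` being `ℱ (k-1)`-measurable, `Y k - X k > -Δ` a.s. for `Δ ≥ 0`, and
`0 < t < 1/Δ` (encoded as `t * Δ < 1`), with probability at least `1 - ε`, simultaneously
for all `n ≥ 1`,
`t · (1/n) ∑_{k=1}^n (E[X k | ℱ (k-1)] - X k) ≤ (1/n) log (1/ε) + (1/n) ∑_{k=1}^n v (t (Y k - X k))`. -/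
theorem stmt_2 {Ω : Type*} {m0 : MeasurableSpace Ω} (P : Measure Ω) [IsProbabilityMeasure P]
    (ℱ : Filtration ℕ m0) (X Y : ℕ → Ω → ℝ)
    (hX : ∀ k, 1 ≤ k → StronglyMeasurable[ℱ k] (X k))
    (hY : ∀ k, 1 ≤ k → StronglyMeasurable[ℱ (k - 1)] (Y k))
    (hXint : ∀ k, 1 ≤ k → Integrable (X k) P)
    (Δ : ℝ) (hΔ : 0 ≤ Δ)
    (hbd : ∀ k, 1 ≤ k → ∀ᵐ ω ∂P, Y k ω - X k ω > -Δ)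
    (t : ℝ) (ht : 0 < t) (htΔ : t * Δ < 1)
    (ε : ℝ) (hε : ε ∈ Set.Ioo (0 : ℝ) 1) :
    ENNReal.ofReal (1 - ε) ≤
      P {ω | ∀ n : ℕ, 1 ≤ n →
        t * ((1 / (n : ℝ)) * ∑ k ∈ Finset.Icc 1 n, ((P[X k|ℱ (k - 1)]) ω - X k ω)) ≤
          (1 / (n : ℝ)) * Real.log (1 / ε) +
            (1 / (n : ℝ)) * ∑ k ∈ Finset.Icc 1 n, v (t * (Y k ω - X k ω))} := by
  obtain ⟨hε0, hε1⟩ := hε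
  set g : ℕ → Ω → ℝ :=
    fun k ω => t * ((P[X k|ℱ (k - 1)]) ω - X k ω) - v (t * (Y k ω - X k ω)) with hg_def
  set M : ℕ → Ω → ℝ := fun n ω => Real.exp (∑ k ∈ Finset.Icc 1 n, g k ω) with hM_def
  have hMpos : ∀ n ω, 0 < M n ω := fun n ω => Real.exp_pos _
  have hM0 : M 0 = fun _ => 1 := by
    funext ω
    show Real.exp (∑ k ∈ Finset.Icc 1 0, g k ω) = 1
    rw [Finset.Icc_eq_empty (by omega), Finset.sum_empty, Real.exp_zero]
  -- measurability of the summands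
  have hg_sm : ∀ k, 1 ≤ k → StronglyMeasurable[ℱ k] (g k) := by
    intro k hk
    have h1 : StronglyMeasurable[ℱ k] (P[X k|ℱ (k - 1)]) :=
      stronglyMeasurable_condExp.mono (ℱ.mono (Nat.sub_le k 1))
    have h2 := hX k hk
    have h3 : StronglyMeasurable[ℱ k] (Y k) := (hY k hk).mono (ℱ.mono (Nat.sub_le k 1))
    have hu : StronglyMeasurable[ℱ k] (fun ω => t * (Y k ω - X k ω)) :=
      stronglyMeasurable_const.mul (h3.sub h2)
    rw [hg_def]
    simp only [v]
    exact (stronglyMeasurable_const.mul (h1.sub h2)).sub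
      (hu.sub ((Real.measurable_log.comp
        (measurable_const.add hu.measurable)).stronglyMeasurable))
  have hM_adapted : StronglyAdapted ℱ M := by
    intro n
    have hsum : StronglyMeasurable[ℱ n] fun ω => ∑ k ∈ Finset.Icc 1 n, g k ω := by
      apply Finset.stronglyMeasurable_fun_sum
      intro k hk
      rw [Finset.mem_Icc] at hk
      exact (hg_sm k hk.1).mono (ℱ.mono hk.2)
    exact Real.continuous_exp.comp_stronglyMeasurable hsum
  -- a.e. positivity of 1 + t A
  have hpos_ae : ∀ k, 1 ≤ k → ∀ᵐ ω ∂P, 0 < 1 + t * (Y k ω - X k ω) := by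
    intro k hk
    filter_upwards [hbd k hk] with ω h
    nlinarith [mul_lt_mul_of_pos_left h ht]
  -- a.e. multiplicative decomposition
  have hfact : ∀ n : ℕ, ∀ᵐ ω ∂P, M (n + 1) ω =
      M n ω * (Real.exp (t * ((P[X (n + 1)|ℱ n]) ω - Y (n + 1) ω)) *
        (1 + t * (Y (n + 1) ω - X (n + 1) ω))) := by
    intro n
    filter_upwards [hpos_ae (n + 1) (by omega)] with ω hpos
    have hsum : (∑ k ∈ Finset.Icc 1 (n + 1), g k ω) =
        (∑ k ∈ Finset.Icc 1 n, g k ω) + g (n + 1) ω :=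
      Finset.sum_Icc_succ_top (by omega) _
    have hg1 : g (n + 1) ω = t * ((P[X (n + 1)|ℱ n]) ω - Y (n + 1) ω) +
        Real.log (1 + t * (Y (n + 1) ω - X (n + 1) ω)) := by
      rw [hg_def]
      simp only [v, Nat.add_sub_cancel]
      ring
    rw [hM_def]
    simp only
    rw [hsum, hg1, Real.exp_add, Real.exp_add, Real.exp_log hpos]
  -- the key one-step inequality, at the level of lower integrals
  have hstep : ∀ n : ℕ, Integrable (M n) P → ∀ s : Set Ω, MeasurableSet[ℱ n] s →
      ∫⁻ ω in s, ENNReal.ofReal (M (n + 1) ω) ∂P ≤ ENNReal.ofReal (∫ ω in s, M n ω ∂P) := by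
    intro n hMn s hs
    have hsm0 : MeasurableSet s := ℱ.le n s hs
    set E : Ω → ℝ := P[X (n + 1)|ℱ n] with hE_def
    set Yk : Ω → ℝ := Y (n + 1) with hYk_def
    set Xk : Ω → ℝ := X (n + 1) with hXk_def
    have hXk_int : Integrable Xk P := hXint (n + 1) (by omega)
    have hYk_sm : StronglyMeasurable[ℱ n] Yk := by
      have := hY (n + 1) (by omega)
      simpa using this
    have hE_sm : StronglyMeasurable[ℱ n] E := stronglyMeasurable_condExp
    set R : Ω → ℝ := fun ω => Real.exp (t * (E ω - Yk ω)) with hR_def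
    have hR_sm : StronglyMeasurable[ℱ n] R :=
      Real.continuous_exp.comp_stronglyMeasurable
        (stronglyMeasurable_const.mul (hE_sm.sub hYk_sm))
    have hR_pos : ∀ ω, 0 < R ω := fun ω => Real.exp_pos _
    have hMn_sm := hM_adapted n
    set G : ℕ → Set Ω := fun m =>
      {ω | |Yk ω| ≤ (m : ℝ)} ∩ ({ω | |E ω| ≤ (m : ℝ)} ∩ {ω | M n ω * R ω ≤ (m : ℝ)}) with hG_def
    have hG_meas : ∀ m, MeasurableSet[ℱ n] (G m) := by
      intro m
      have hYabs : Measurable[ℱ n] fun ω => |Yk ω| :=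
        continuous_abs.measurable.comp hYk_sm.measurable
      have hEabs : Measurable[ℱ n] fun ω => |E ω| :=
        continuous_abs.measurable.comp hE_sm.measurable
      have hMR : Measurable[ℱ n] fun ω => M n ω * R ω := (hMn_sm.mul hR_sm).measurable
      exact (hYabs measurableSet_Iic).inter
        ((hEabs measurableSet_Iic).inter (hMR measurableSet_Iic))
    have hGmono : Monotone G := by
      intro a b hab ω hω
      obtain ⟨h1, h2, h3⟩ := hω
      have hc : (a : ℝ) ≤ (b : ℝ) := by exact_mod_cast hab
      exact ⟨h1.trans hc, h2.trans hc, h3.trans hc⟩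
    set φ : ℕ → Ω → ℝ := fun m => (s ∩ G m).indicator (fun ω => M n ω * R ω) with hφ_def
    have hφ_sm : ∀ m, StronglyMeasurable[ℱ n] (φ m) := fun m =>
      (hMn_sm.mul hR_sm).indicator (hs.inter (hG_meas m))
    have hφ_nonneg : ∀ m ω, 0 ≤ φ m ω := fun m ω =>
      Set.indicator_nonneg (fun ω _ => mul_nonneg (hMpos n ω).le (hR_pos ω).le) ω
    have hφ_bdd : ∀ m ω, ‖φ m ω‖ ≤ (m : ℝ) := by
      intro m ω
      rw [Real.norm_of_nonneg (hφ_nonneg m ω)]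
      by_cases hω : ω ∈ s ∩ G m
      · simp only [hφ_def, Set.indicator_of_mem hω]
        exact hω.2.2.2
      · simp only [hφ_def, Set.indicator_of_notMem hω]
        positivity
    -- bounded strongly measurable functions are integrable
    have hbm : ∀ (f : Ω → ℝ), StronglyMeasurable[ℱ n] f → ∀ C : ℝ, (∀ ω, ‖f ω‖ ≤ C) →
        Integrable f P := fun f hf C hC =>
      ⟨(hf.mono (ℱ.le n)).aestronglyMeasurable,
        HasFiniteIntegral.of_bounded (ae_of_all _ hC)⟩
    have hφX_int : ∀ m, Integrable (fun ω => φ m ω * Xk ω) P := fun m =>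
      hXk_int.bdd_mul ((hφ_sm m).mono (ℱ.le n)).aestronglyMeasurable
        (ae_of_all _ (hφ_bdd m))
    have hE_int : Integrable E P := integrable_condExp
    have hφE_int : ∀ m, Integrable (fun ω => φ m ω * E ω) P := fun m =>
      hE_int.bdd_mul ((hφ_sm m).mono (ℱ.le n)).aestronglyMeasurable
        (ae_of_all _ (hφ_bdd m))
    have hφY_int : ∀ m, Integrable (fun ω => φ m ω * (1 + t * Yk ω)) P := by
      intro m
      refine hbm _ ((hφ_sm m).mul (stronglyMeasurable_const.add
        (stronglyMeasurable_const.mul hYk_sm))) ((m : ℝ) * (1 + t * m)) ?_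
      intro ω
      rw [norm_mul]
      by_cases hω : ω ∈ s ∩ G m
      · have hb1 : ‖φ m ω‖ ≤ (m : ℝ) := hφ_bdd m ω
        have h0 : (0:ℝ) ≤ m := Nat.cast_nonneg m
        have hb2 : ‖1 + t * Yk ω‖ ≤ 1 + t * m := by
          have hmem := hω.2.1
          rw [Set.mem_setOf_eq] at hmem
          have hYb := abs_le.mp hmem
          rw [Real.norm_eq_abs, abs_le]
          constructor <;> nlinarith
        exact mul_le_mul hb1 hb2 (norm_nonneg _) h0
      · simp only [hφ_def, Set.indicator_of_notMem hω, norm_zero, zero_mul]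
        have h0 : (0:ℝ) ≤ m := Nat.cast_nonneg m
        have h1 : (0:ℝ) ≤ t * m := mul_nonneg ht.le h0
        nlinarith
    -- the condexp pull-out identity
    have P1 : ∀ m, ∫ ω, φ m ω * Xk ω ∂P = ∫ ω, φ m ω * E ω ∂P := by
      intro m
      have hce : P[(fun ω => φ m ω * Xk ω)|ℱ n] =ᵐ[P] fun ω => φ m ω * E ω := by
        have h := condExp_stronglyMeasurable_mul_of_bound (ℱ.le n) (hφ_sm m) hXk_int
          (m : ℝ) (ae_of_all _ (hφ_bdd m))
        exact h
      calc ∫ ω, φ m ω * Xk ω ∂P = ∫ ω, (P[(fun ω => φ m ω * Xk ω)|ℱ n]) ω ∂P :=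
            (integral_condExp (ℱ.le n)).symm
        _ = ∫ ω, φ m ω * E ω ∂P := integral_congr_ae hce
    -- the conditional-expectation-level bound
    have P2 : ∀ m, ∫ ω, φ m ω * (1 + t * Yk ω - t * E ω) ∂P ≤ ∫ ω in s, M n ω ∂P := by
      intro m
      have hpt : ∀ ω, φ m ω * (1 + t * Yk ω - t * E ω) ≤ s.indicator (M n) ω := by
        intro ω
        by_cases hω : ω ∈ s ∩ G m
        · simp only [hφ_def, Set.indicator_of_mem hω, Set.indicator_of_mem hω.1]
          have h1 : 1 + t * Yk ω - t * E ω ≤ Real.exp (t * (Yk ω - E ω)) := by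
            nlinarith [Real.add_one_le_exp (t * (Yk ω - E ω))]
          have h2 : M n ω * R ω * Real.exp (t * (Yk ω - E ω)) = M n ω := by
            simp only [hR_def]
            rw [mul_assoc, ← Real.exp_add,
              (by ring : t * (E ω - Yk ω) + t * (Yk ω - E ω) = 0), Real.exp_zero, mul_one]
          calc M n ω * R ω * (1 + t * Yk ω - t * E ω)
              ≤ M n ω * R ω * Real.exp (t * (Yk ω - E ω)) :=
              mul_le_mul_of_nonneg_left h1 (mul_nonneg (hMpos n ω).le (hR_pos ω).le)
            _ = M n ω := h2
        · simp only [hφ_def, Set.indicator_of_notMem hω, zero_mul]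
          exact Set.indicator_nonneg (fun ω _ => (hMpos n ω).le) ω
      have hint1 : Integrable (fun ω => φ m ω * (1 + t * Yk ω - t * E ω)) P := by
        have e2 : (fun ω => φ m ω * (1 + t * Yk ω - t * E ω))
            = fun ω => (φ m ω * (1 + t * Yk ω)) - t * (φ m ω * E ω) := by
          funext ω; ring
        rw [e2]
        exact (hφY_int m).sub ((hφE_int m).const_mul t)
      have hint2 : Integrable (s.indicator (M n)) P := hMn.indicator hsm0
      calc ∫ ω, φ m ω * (1 + t * Yk ω - t * E ω) ∂P
          ≤ ∫ ω, s.indicator (M n) ω ∂P := integral_mono hint1 hint2 hpt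
        _ = ∫ ω in s, M n ω ∂P := integral_indicator hsm0
    -- combine P1 and P2
    have hψ_int : ∀ m, Integrable (fun ω => φ m ω * (1 + t * (Yk ω - Xk ω))) P := by
      intro m
      have e1 : (fun ω => φ m ω * (1 + t * (Yk ω - Xk ω)))
          = fun ω => (φ m ω * (1 + t * Yk ω)) - t * (φ m ω * Xk ω) := by
        funext ω; ring
      rw [e1]
      exact (hφY_int m).sub ((hφX_int m).const_mul t)
    have P3 : ∀ m, ∫ ω, φ m ω * (1 + t * (Yk ω - Xk ω)) ∂P ≤ ∫ ω in s, M n ω ∂P := by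
      intro m
      have e1 : (fun ω => φ m ω * (1 + t * (Yk ω - Xk ω)))
          = fun ω => (φ m ω * (1 + t * Yk ω)) - t * (φ m ω * Xk ω) := by
        funext ω; ring
      have e2 : (fun ω => φ m ω * (1 + t * Yk ω - t * E ω))
          = fun ω => (φ m ω * (1 + t * Yk ω)) - t * (φ m ω * E ω) := by
        funext ω; ring
      have h2 := P2 m
      rw [e2, integral_sub (hφY_int m) ((hφE_int m).const_mul t),
        integral_const_mul] at h2
      rw [e1, integral_sub (hφY_int m) ((hφX_int m).const_mul t),
        integral_const_mul, P1 m]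
      linarith
    -- monotone convergence
    have hae_eq : ∀ᵐ ω ∂P, ∀ m : ℕ,
        φ m ω * (1 + t * (Yk ω - Xk ω)) = (s ∩ G m).indicator (M (n + 1)) ω := by
      filter_upwards [hfact n] with ω hω
      intro m
      by_cases hm : ω ∈ s ∩ G m
      · rw [Set.indicator_of_mem hm]
        simp only [hφ_def, Set.indicator_of_mem hm]
        rw [hω]
        simp only [hR_def, hE_def, hYk_def, hXk_def]
        ring
      · rw [Set.indicator_of_notMem hm]
        simp only [hφ_def, Set.indicator_of_notMem hm, zero_mul]
    have hψ_meas : ∀ m : ℕ, AEMeasurable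
        (fun ω => ENNReal.ofReal (φ m ω * (1 + t * (Yk ω - Xk ω)))) P := by
      intro m
      have hXk_m : Measurable Xk := ((hX (n + 1) (by omega)).mono (ℱ.le (n + 1))).measurable
      have hYk_m : Measurable Yk := (hYk_sm.mono (ℱ.le n)).measurable
      have hφ_m : Measurable (φ m) := ((hφ_sm m).mono (ℱ.le n)).measurable
      exact ((hφ_m.mul ((measurable_const.mul (hYk_m.sub hXk_m)).const_add 1)).ennreal_ofReal).aemeasurable
    have hmono : ∀ᵐ ω ∂P, Monotone fun m =>
        ENNReal.ofReal (φ m ω * (1 + t * (Yk ω - Xk ω))) := by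
      filter_upwards [hae_eq] with ω hω
      intro a b hab
      simp only
      rw [hω a, hω b]
      apply ENNReal.ofReal_le_ofReal
      exact Set.indicator_le_indicator_of_subset
        (Set.inter_subset_inter_right s (hGmono hab)) (fun ω => (hMpos _ ω).le) ω
    have hψ_nonneg : ∀ m : ℕ, 0 ≤ᵐ[P] fun ω => φ m ω * (1 + t * (Yk ω - Xk ω)) := by
      intro m
      filter_upwards [hae_eq] with ω hω
      rw [Pi.zero_apply, hω m]
      exact Set.indicator_nonneg (fun ω _ => (hMpos _ ω).le) ω
    have hsup : ∀ᵐ ω ∂P, (⨆ m : ℕ, ENNReal.ofReal (φ m ω * (1 + t * (Yk ω - Xk ω))))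
        = s.indicator (fun ω => ENNReal.ofReal (M (n + 1) ω)) ω := by
      filter_upwards [hae_eq] with ω hω
      obtain ⟨m₀, hm₀⟩ : ∃ m : ℕ, |Yk ω| ≤ (m : ℝ) ∧ |E ω| ≤ (m : ℝ) ∧ M n ω * R ω ≤ (m : ℝ) := by
        obtain ⟨a, ha⟩ := exists_nat_ge (max |Yk ω| (max |E ω| (M n ω * R ω)))
        refine ⟨a, ?_, ?_, ?_⟩
        · exact le_trans (le_max_left _ _) ha
        · exact le_trans (le_trans (le_max_left _ _) (le_max_right _ _)) ha
        · exact le_trans (le_trans (le_max_right _ _) (le_max_right _ _)) ha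
      by_cases hω_s : ω ∈ s
      · rw [Set.indicator_of_mem hω_s]
        apply le_antisymm
        · apply iSup_le
          intro m
          rw [hω m]
          apply ENNReal.ofReal_le_ofReal
          exact Set.indicator_le' (fun _ _ => le_rfl) (fun ω _ => (hMpos _ ω).le) ω
        · have hmem : ω ∈ s ∩ G m₀ := ⟨hω_s, hm₀.1, hm₀.2.1, hm₀.2.2⟩
          refine le_iSup_of_le m₀ ?_
          rw [hω m₀, Set.indicator_of_mem hmem]
      · rw [Set.indicator_of_notMem hω_s]
        refine le_antisymm (iSup_le fun m => ?_) zero_le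
        rw [hω m, Set.indicator_of_notMem (fun hc => hω_s hc.1)]
        simp
    calc ∫⁻ ω in s, ENNReal.ofReal (M (n + 1) ω) ∂P
        = ∫⁻ ω, s.indicator (fun ω => ENNReal.ofReal (M (n + 1) ω)) ω ∂P :=
          (lintegral_indicator hsm0 _).symm
      _ = ∫⁻ ω, ⨆ m : ℕ, ENNReal.ofReal (φ m ω * (1 + t * (Yk ω - Xk ω))) ∂P :=
          (lintegral_congr_ae (hsup.mono fun ω h => h)).symm
      _ = ⨆ m : ℕ, ∫⁻ ω, ENNReal.ofReal (φ m ω * (1 + t * (Yk ω - Xk ω))) ∂P :=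
          lintegral_iSup' hψ_meas hmono
      _ ≤ ENNReal.ofReal (∫ ω in s, M n ω ∂P) := by
          apply iSup_le
          intro m
          rw [← ofReal_integral_eq_lintegral_ofReal (hψ_int m) (hψ_nonneg m)]
          exact ENNReal.ofReal_le_ofReal (P3 m)
  -- integrability of M
  have hMint : ∀ n, Integrable (M n) P := by
    intro n
    induction n with
    | zero => rw [hM0]; exact integrable_const 1
    | succ n ih =>
      have h := hstep n ih Set.univ MeasurableSet.univ
      rw [Measure.restrict_univ] at h
      refine ⟨((hM_adapted (n + 1)).mono (ℱ.le _)).aestronglyMeasurable, ?_⟩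
      rw [hasFiniteIntegral_iff_norm]
      have heq : ∫⁻ ω, ENNReal.ofReal ‖M (n + 1) ω‖ ∂P
          = ∫⁻ ω, ENNReal.ofReal (M (n + 1) ω) ∂P := by
        refine lintegral_congr fun ω => ?_
        rw [Real.norm_of_nonneg (hMpos _ ω).le]
      rw [heq]
      exact lt_of_le_of_lt h ENNReal.ofReal_lt_top
  -- set-integral supermartingale inequality
  have hineq : ∀ n, ∀ s : Set Ω, MeasurableSet[ℱ n] s →
      ∫ ω in s, M (n + 1) ω ∂P ≤ ∫ ω in s, M n ω ∂P := by
    intro n s hs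
    have h := hstep n (hMint n) s hs
    have hr : ∫ ω in s, M (n + 1) ω ∂P
        = (∫⁻ ω in s, ENNReal.ofReal (M (n + 1) ω) ∂P).toReal :=
      integral_eq_lintegral_of_nonneg_ae (ae_of_all _ fun ω => (hMpos _ ω).le)
        (((hM_adapted (n + 1)).mono (ℱ.le _)).aestronglyMeasurable.restrict)
    rw [hr]
    have h2 := ENNReal.toReal_mono ENNReal.ofReal_ne_top h
    rwa [ENNReal.toReal_ofReal
      (setIntegral_nonneg (ℱ.le n s hs) fun ω _ => (hMpos n ω).le)] at h2
  have hsuper : Supermartingale M ℱ P :=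
    supermartingale_of_setIntegral_succ_le hM_adapted hMint hineq
  -- Ville's inequality
  set c : ℝ := 1 / ε with hc_def
  have hc : 1 < c := one_lt_one_div hε0 hε1
  set B : ℕ → Set Ω := fun n => {ω | ∃ k ≤ n, c ≤ M k ω} with hB_def
  have hB_meas : ∀ n, MeasurableSet (B n) := by
    intro n
    have : B n = ⋃ k, ⋃ _ : k ≤ n, {ω | c ≤ M k ω} := by
      ext ω; simp [hB_def]
    rw [this]
    exact MeasurableSet.iUnion fun k => MeasurableSet.iUnion fun _ =>
      measurableSet_le measurable_const ((hM_adapted k).mono (ℱ.le k)).measurable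
  have hBmono : Monotone B := fun a b hab ω => by
    rintro ⟨k, hk, h⟩; exact ⟨k, hk.trans hab, h⟩
  have hPB : ∀ n, P (B n) ≤ ENNReal.ofReal ε := by
    intro n
    set τ : Ω → ℕ∞ := fun ω => (hittingBtwn M {y : ℝ | c ≤ y} 0 n ω : ℕ) with hτ_def
    have hτ_st : IsStoppingTime ℱ τ :=
      hittingBtwn_isStoppingTime hsuper.stronglyAdapted.adapted measurableSet_Ici
    have hτ_le : ∀ ω, τ ω ≤ n := fun ω => Nat.cast_le.2 (hittingBtwn_le ω)
    have hsv_int : Integrable (stoppedValue M τ) P := by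
      have h := (hsuper.neg.integrable_stoppedValue hτ_st hτ_le).neg
      have e : -stoppedValue (-M) τ = stoppedValue M τ := by
        funext ω
        simp [stoppedValue]
      rwa [e] at h
    have hsv_nonneg : ∀ ω, 0 ≤ stoppedValue M τ ω := fun ω => (hMpos _ ω).le
    have hEsv : ∫ ω, stoppedValue M τ ω ∂P ≤ 1 := by
      have h0 : IsStoppingTime ℱ (fun _ : Ω => (0 : ℕ∞)) := isStoppingTime_const ℱ 0
      have hmono := hsuper.neg.expected_stoppedValue_mono h0 hτ_st
        (fun ω => zero_le) hτ_le
      have e0 : stoppedValue (-M) (fun _ : Ω => (0 : ℕ∞)) = fun _ => (-1 : ℝ) := by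
        funext ω
        simp [stoppedValue, hM0, show WithTop.untopA (0 : ℕ∞) = 0 from rfl]
      have eτ : stoppedValue (-M) τ = fun ω => -stoppedValue M τ ω := by
        funext ω
        simp [stoppedValue]
      rw [e0, eτ] at hmono
      simp only [integral_neg, integral_const, measure_univ, ENNReal.toReal_one, probReal_univ,
        smul_eq_mul, mul_one, one_mul, mul_neg, neg_neg] at hmono
      linarith
    have hset : ∀ ω ∈ B n, c ≤ stoppedValue M τ ω := by
      rintro ω ⟨k, hk, hω⟩
      exact stoppedValue_hittingBtwn_mem ⟨k, ⟨Nat.zero_le _, hk⟩, hω⟩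
    have hcP : c * (P (B n)).toReal ≤ 1 := by
      have h1 : c * (P (B n)).toReal ≤ ∫ ω in B n, stoppedValue M τ ω ∂P :=
        by
          have h := setIntegral_ge_of_const_le (hB_meas n) (measure_ne_top P _) hset
            hsv_int.integrableOn
          rwa [smul_eq_mul, measureReal_def, mul_comm] at h
      have h2 : ∫ ω in B n, stoppedValue M τ ω ∂P ≤ ∫ ω, stoppedValue M τ ω ∂P :=
        setIntegral_le_integral hsv_int (ae_of_all _ hsv_nonneg)
      linarith
    rw [ENNReal.le_ofReal_iff_toReal_le (measure_ne_top P _) hε0.le]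
    have hcε : c * ε = 1 := by
      rw [hc_def]
      field_simp
    have hc0 : (0:ℝ) < c := by linarith
    nlinarith [ENNReal.toReal_nonneg (a := P (B n))]
  have hPBU : P (⋃ n, B n) ≤ ENNReal.ofReal ε := by
    rw [hBmono.measure_iUnion]
    exact iSup_le hPB
  -- conclusion
  have hsub : (⋃ n, B n)ᶜ ⊆ {ω | ∀ n : ℕ, 1 ≤ n →
      t * ((1 / (n : ℝ)) * ∑ k ∈ Finset.Icc 1 n, ((P[X k|ℱ (k - 1)]) ω - X k ω)) ≤
        (1 / (n : ℝ)) * Real.log (1 / ε) +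
          (1 / (n : ℝ)) * ∑ k ∈ Finset.Icc 1 n, v (t * (Y k ω - X k ω))} := by
    intro ω hω
    intro n hn
    have hωn : ω ∉ B n := fun hmem => hω (Set.mem_iUnion.2 ⟨n, hmem⟩)
    have hMlt : M n ω < c := by
      by_contra h
      exact hωn ⟨n, le_rfl, le_of_not_gt h⟩
    have hS : (∑ k ∈ Finset.Icc 1 n, g k ω) < Real.log c := by
      rw [Real.lt_log_iff_exp_lt (by linarith : (0:ℝ) < c)]
      exact hMlt
    have hgsum : (∑ k ∈ Finset.Icc 1 n, g k ω)
        = t * (∑ k ∈ Finset.Icc 1 n, ((P[X k|ℱ (k - 1)]) ω - X k ω))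
          - ∑ k ∈ Finset.Icc 1 n, v (t * (Y k ω - X k ω)) := by
      rw [Finset.mul_sum, ← Finset.sum_sub_distrib]
    have hn' : (0:ℝ) < (n : ℝ) := by exact_mod_cast hn
    have key : t * (∑ k ∈ Finset.Icc 1 n, ((P[X k|ℱ (k - 1)]) ω - X k ω))
        ≤ Real.log (1 / ε) + ∑ k ∈ Finset.Icc 1 n, v (t * (Y k ω - X k ω)) := by
      rw [hgsum] at hS
      rw [hc_def] at hS
      linarith
    have h1n : (0:ℝ) < 1 / (n : ℝ) := by positivity
    calc t * ((1 / (n : ℝ)) * ∑ k ∈ Finset.Icc 1 n, ((P[X k|ℱ (k - 1)]) ω - X k ω))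
        = (1 / (n : ℝ)) *
            (t * ∑ k ∈ Finset.Icc 1 n, ((P[X k|ℱ (k - 1)]) ω - X k ω)) := by ring
      _ ≤ (1 / (n : ℝ)) * (Real.log (1 / ε) +
            ∑ k ∈ Finset.Icc 1 n, v (t * (Y k ω - X k ω))) :=
          mul_le_mul_of_nonneg_left key h1n.le
      _ = (1 / (n : ℝ)) * Real.log (1 / ε) +
            (1 / (n : ℝ)) * ∑ k ∈ Finset.Icc 1 n, v (t * (Y k ω - X k ω)) := by ring
  calc ENNReal.ofReal (1 - ε) = 1 - ENNReal.ofReal ε := by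
        rw [ENNReal.ofReal_sub _ hε0.le, ENNReal.ofReal_one]
    _ ≤ 1 - P (⋃ n, B n) := tsub_le_tsub_left hPBU 1
    _ = P ((⋃ n, B n)ᶜ) := (prob_compl_eq_one_sub (MeasurableSet.iUnion hB_meas)).symm
    _ ≤ _ := measure_mono hsub
end

section
/- Let (X_k)_{k=1}^n and (Y_k)_{k=1}^n be sequences of random variables adapted to a filtration (𝓕_k)_{k=0}^n, with X_k 𝓕_k-measurable and Y_k 𝓕_{k−1}-measurable, and suppose A_k := (Y_k − X_k)/Δ > −1 almost surely for some Δ ≥ 0. Let K be a finite subset of (0,1) and δ ∈ (0,1). Define C = (1/n)·log(|K|/δ) and Σ = min_{s∈K} [ Δ√C·(1−s)/s + (Δ/√C)·(1/n)∑_{k=1}^n v(s·A_k)/s ]. Then with probability at least 1 − δ: (1/n)∑_{k=1}^n (E[X_k | 𝓕_{k−1}] − X_k) ≤ Δ·C + Σ·√C. -/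
open MeasureTheory

open scoped ENNReal

lemma iSup_min_natCast (x : ℝ≥0∞) : ⨆ m : ℕ, min x (m : ℝ≥0∞) = x := by
  refine le_antisymm (iSup_le fun m => min_le_left _ _) ?_
  by_cases hx : x = ⊤
  · subst hx
    calc (⊤ : ℝ≥0∞) = ⨆ m : ℕ, (m : ℝ≥0∞) := ENNReal.iSup_natCast.symm
    _ ≤ ⨆ m : ℕ, min ⊤ (m : ℝ≥0∞) := by simp
  · obtain ⟨m, hm⟩ := ENNReal.exists_nat_gt hx
    have : min x (m : ℝ≥0∞) = x := min_eq_left hm.le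
    exact le_iSup_of_le m this.ge

lemma lint_ofReal_eq {Ω : Type*} {m0 : MeasurableSpace Ω} (P : Measure Ω)
    (u w : Ω → ℝ) (hu : AEStronglyMeasurable u P) (hw : AEStronglyMeasurable w P)
    (hu0 : 0 ≤ᵐ[P] u) (hw0 : 0 ≤ᵐ[P] w)
    (hint : Integrable (fun ω => u ω - w ω) P)
    (hz : ∫ ω, (u ω - w ω) ∂P = 0) :
    ∫⁻ ω, ENNReal.ofReal (u ω) ∂P = ∫⁻ ω, ENNReal.ofReal (w ω) ∂P := by
  by_cases hwint : Integrable w P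
  · have huint : Integrable u P := by
      have h := hint.add hwint
      exact h.congr (by filter_upwards with ω; simp)
    rw [← ofReal_integral_eq_lintegral_ofReal huint hu0,
      ← ofReal_integral_eq_lintegral_ofReal hwint hw0]
    have : ∫ ω, u ω ∂P - ∫ ω, w ω ∂P = 0 := by
      rw [← integral_sub huint hwint]; exact hz
    congr 1; linarith
  · have huint : ¬ Integrable u P := by
      intro h
      have := h.sub hint
      exact hwint (this.congr (by filter_upwards with ω; simp))
    have h1 : ∫⁻ ω, ENNReal.ofReal (u ω) ∂P = ⊤ := by
      by_contra h
      exact huint ((lintegral_ofReal_ne_top_iff_integrable hu hu0).mp h)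
    have h2 : ∫⁻ ω, ENNReal.ofReal (w ω) ∂P = ⊤ := by
      by_contra h
      exact hwint ((lintegral_ofReal_ne_top_iff_integrable hw hw0).mp h)
    rw [h1, h2]

lemma int_mul_condexp {Ω : Type*} {m0 : MeasurableSpace Ω} (P : Measure Ω)
    [IsProbabilityMeasure P] {G : MeasurableSpace Ω} (hG : G ≤ m0)
    {φ X : Ω → ℝ} (hφ : StronglyMeasurable[G] φ) (hb : ∃ C, ∀ ω, ‖φ ω‖ ≤ C)
    (hX : Integrable X P) :
    ∫ ω, φ ω * (P[X|G]) ω ∂P = ∫ ω, φ ω * X ω ∂P := by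
  have hφ0 : AEStronglyMeasurable[m0] φ P := (hφ.mono hG).aestronglyMeasurable
  have hφX : Integrable (φ * X) P := by
    obtain ⟨C, hC⟩ := hb; exact hX.bdd_mul hφ0 (Filter.Eventually.of_forall hC)
  have h1 : P[φ * X|G] =ᵐ[P] φ * P[X|G] := condExp_mul_of_stronglyMeasurable_left hφ hφX hX
  have h2 : ∫ ω, (P[φ * X|G]) ω ∂P = ∫ ω, (φ * X) ω ∂P := integral_condExp hG
  have h3 := integral_congr_ae h1
  calc ∫ ω, φ ω * (P[X|G]) ω ∂P = ∫ ω, (φ * P[X|G]) ω ∂P := rfl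
  _ = ∫ ω, (P[φ * X|G]) ω ∂P := h3.symm
  _ = ∫ ω, (φ * X) ω ∂P := h2
  _ = ∫ ω, φ ω * X ω ∂P := rfl

lemma key_step {Ω : Type*} {m0 : MeasurableSpace Ω} (P : Measure Ω)
    [IsProbabilityMeasure P] {G : MeasurableSpace Ω} (hG : G ≤ m0)
    {g : Ω → ℝ≥0∞} (hg : Measurable[G] g)
    {a b X : Ω → ℝ} (ha : Measurable[m0] a) (hb : Measurable[m0] b)
    (ha0 : 0 ≤ᵐ[P] a) (hb0 : 0 ≤ᵐ[P] b)
    (hX : Integrable X P) (c : ℝ)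
    (hab : ∀ ω, a ω - b ω = c * ((P[X|G]) ω - X ω)) :
    ∫⁻ ω, g ω * ENNReal.ofReal (a ω) ∂P = ∫⁻ ω, g ω * ENNReal.ofReal (b ω) ∂P := by
  have hg0 : Measurable[m0] g := hg.mono hG le_rfl
  set φ : ℕ → Ω → ℝ := fun m ω => (min (g ω) (m : ℝ≥0∞)).toReal with hφdef
  have hgmne : ∀ (m : ℕ) ω, min (g ω) (m : ℝ≥0∞) ≠ ⊤ :=
    fun m ω => ((min_le_right _ _).trans_lt (ENNReal.natCast_lt_top m)).ne
  have hofReal : ∀ (m : ℕ) ω, ENNReal.ofReal (φ m ω) = min (g ω) (m : ℝ≥0∞) :=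
    fun m ω => ENNReal.ofReal_toReal (hgmne m ω)
  have hφmeas : ∀ m : ℕ, Measurable[m0] (φ m) :=
    fun m => (hg0.min measurable_const).ennreal_toReal
  have hφbdd : ∀ m : ℕ, ∀ ω, ‖φ m ω‖ ≤ (m : ℝ) := by
    intro m ω
    rw [Real.norm_eq_abs, abs_of_nonneg ENNReal.toReal_nonneg]
    calc (min (g ω) (m : ℝ≥0∞)).toReal ≤ ((m : ℝ≥0∞)).toReal :=
          ENNReal.toReal_mono (ENNReal.natCast_ne_top m) (min_le_right _ _)
    _ = (m : ℝ) := by simp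
  have hD : Integrable (fun ω => c * ((P[X|G]) ω - X ω)) P :=
    (integrable_condExp.sub hX).const_mul c
  -- per-level identity
  have hkey : ∀ m : ℕ, ∫⁻ ω, min (g ω) (m : ℝ≥0∞) * ENNReal.ofReal (a ω) ∂P
      = ∫⁻ ω, min (g ω) (m : ℝ≥0∞) * ENNReal.ofReal (b ω) ∂P := by
    intro m
    have hrwa : ∀ ω, min (g ω) (m : ℝ≥0∞) * ENNReal.ofReal (a ω)
        = ENNReal.ofReal (φ m ω * a ω) := by
      intro ω
      rw [ENNReal.ofReal_mul ENNReal.toReal_nonneg, hofReal]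
    have hrwb : ∀ ω, min (g ω) (m : ℝ≥0∞) * ENNReal.ofReal (b ω)
        = ENNReal.ofReal (φ m ω * b ω) := by
      intro ω
      rw [ENNReal.ofReal_mul ENNReal.toReal_nonneg, hofReal]
    rw [lintegral_congr hrwa, lintegral_congr hrwb]
    have hsub : (fun ω => φ m ω * a ω - φ m ω * b ω)
        = fun ω => φ m ω * (c * ((P[X|G]) ω - X ω)) := by
      funext ω
      rw [← hab ω]; ring
    have hφm : StronglyMeasurable[G] (φ m) :=
      ((hg.min measurable_const).ennreal_toReal).stronglyMeasurable
    have hφE : Integrable (fun ω => φ m ω * (P[X|G]) ω) P :=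
      integrable_condExp.bdd_mul (hφmeas m).aestronglyMeasurable (Filter.Eventually.of_forall (hφbdd m))
    have hφX : Integrable (fun ω => φ m ω * X ω) P :=
      hX.bdd_mul (hφmeas m).aestronglyMeasurable (Filter.Eventually.of_forall (hφbdd m))
    refine lint_ofReal_eq P _ _ ((hφmeas m).mul ha).aestronglyMeasurable
      ((hφmeas m).mul hb).aestronglyMeasurable ?_ ?_ ?_ ?_
    · filter_upwards [ha0] with ω h using mul_nonneg ENNReal.toReal_nonneg h
    · filter_upwards [hb0] with ω h using mul_nonneg ENNReal.toReal_nonneg h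
    · rw [hsub]
      exact hD.bdd_mul (hφmeas m).aestronglyMeasurable (Filter.Eventually.of_forall (hφbdd m))
    · have : ∀ ω, φ m ω * a ω - φ m ω * b ω
          = c * (φ m ω * (P[X|G]) ω - φ m ω * X ω) := by
        intro ω; rw [show φ m ω * a ω - φ m ω * b ω = φ m ω * (a ω - b ω) by ring,
          hab ω]; ring
      rw [integral_congr_ae (Filter.Eventually.of_forall this), integral_const_mul,
        integral_sub hφE hφX, int_mul_condexp P hG hφm ⟨m, hφbdd m⟩ hX]
      ring
  -- pass to the limit
  have hmono : ∀ (h : Ω → ℝ), ∀ᵐ ω ∂P, Monotone fun m : ℕ =>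
      min (g ω) (m : ℝ≥0∞) * ENNReal.ofReal (h ω) := by
    intro h
    filter_upwards with ω
    exact fun i j hij => mul_le_mul' (min_le_min le_rfl (Nat.cast_le.mpr hij)) le_rfl
  have hsup : ∀ (h : Ω → ℝ), ∀ ω, (⨆ m : ℕ, min (g ω) (m : ℝ≥0∞) * ENNReal.ofReal (h ω))
      = g ω * ENNReal.ofReal (h ω) := by
    intro h ω
    rw [← ENNReal.iSup_mul, iSup_min_natCast]
  have hlima : ∫⁻ ω, g ω * ENNReal.ofReal (a ω) ∂P
      = ⨆ m : ℕ, ∫⁻ ω, min (g ω) (m : ℝ≥0∞) * ENNReal.ofReal (a ω) ∂P := by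
    rw [← lintegral_iSup' (f := fun m ω => min (g ω) (m : ℝ≥0∞) * ENNReal.ofReal (a ω)) (fun m => ((hg0.min measurable_const).mul
      ha.ennreal_ofReal).aemeasurable) (hmono a)]
    exact lintegral_congr fun ω => (hsup a ω).symm
  have hlimb : ∫⁻ ω, g ω * ENNReal.ofReal (b ω) ∂P
      = ⨆ m : ℕ, ∫⁻ ω, min (g ω) (m : ℝ≥0∞) * ENNReal.ofReal (b ω) ∂P := by
    rw [← lintegral_iSup' (f := fun m ω => min (g ω) (m : ℝ≥0∞) * ENNReal.ofReal (b ω)) (fun m => ((hg0.min measurable_const).mul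
      hb.ennreal_ofReal).aemeasurable) (hmono b)]
    exact lintegral_congr fun ω => (hsup b ω).symm
  rw [hlima, hlimb]
  exact iSup_congr hkey

lemma pointwise_log {n : ℕ} {s c : ℝ} (hc : 0 < c)
    (A B : ℕ → ℝ)
    (hA : ∀ k ∈ Finset.Icc 1 n, 0 < 1 + s * A k)
    (hB : ∀ k ∈ Finset.Icc 1 n, 0 < 1 + s * B k)
    (hprod : ∏ k ∈ Finset.Icc 1 n, (1 + s * A k) / (1 + s * B k) ≤ c) :
    s * ∑ k ∈ Finset.Icc 1 n, (A k - B k) ≤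
      Real.log c + ∑ k ∈ Finset.Icc 1 n, v (s * A k) := by
  have h1 : ∀ k ∈ Finset.Icc 1 n,
      s * A k - v (s * A k) - s * B k ≤
        Real.log (1 + s * A k) - Real.log (1 + s * B k) := by
    intro k hk
    have hlb := Real.log_le_sub_one_of_pos (hB k hk)
    have hla : Real.log (1 + s * A k) = s * A k - v (s * A k) := by
      unfold v; ring
    linarith
  have h2 := Finset.sum_le_sum h1
  have h3 : ∑ k ∈ Finset.Icc 1 n, (Real.log (1 + s * A k) - Real.log (1 + s * B k))
      = Real.log (∏ k ∈ Finset.Icc 1 n, (1 + s * A k) / (1 + s * B k)) := by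
    rw [Real.log_prod (fun k hk => div_ne_zero (hA k hk).ne' (hB k hk).ne')]
    exact Finset.sum_congr rfl fun k hk =>
      (Real.log_div (hA k hk).ne' (hB k hk).ne').symm
  have hprodpos : 0 < ∏ k ∈ Finset.Icc 1 n, (1 + s * A k) / (1 + s * B k) :=
    Finset.prod_pos fun k hk => div_pos (hA k hk) (hB k hk)
  have h4 : Real.log (∏ k ∈ Finset.Icc 1 n, (1 + s * A k) / (1 + s * B k))
      ≤ Real.log c := Real.log_le_log hprodpos hprod
  have h5 : ∑ k ∈ Finset.Icc 1 n, (s * A k - v (s * A k) - s * B k)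
      = s * ∑ k ∈ Finset.Icc 1 n, (A k - B k)
        - ∑ k ∈ Finset.Icc 1 n, v (s * A k) := by
    rw [Finset.mul_sum, ← Finset.sum_sub_distrib]
    refine Finset.sum_congr rfl fun k hk => by ring
  rw [h5, h3] at h2
  linarith [h2.trans h4]

lemma b_pos {Ω : Type*} {m0 : MeasurableSpace Ω} (P : Measure Ω)
    [IsProbabilityMeasure P] {G : MeasurableSpace Ω} (hG : G ≤ m0)
    {X Y : Ω → ℝ} (hXint : Integrable X P) (hYm : StronglyMeasurable[G] Y)
    {Δ s : ℝ} (hΔ : 0 < Δ) (hs0 : 0 < s) (hs1 : s < 1)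
    (hAY : ∀ᵐ ω ∂P, (Y ω - X ω) / Δ > -1) :
    ∀ᵐ ω ∂P, 0 < 1 + s * ((Y ω - (P[X|G]) ω) / Δ) := by
  letI : MeasurableSpace Ω := m0
  set E : Ω → ℝ := P[X|G] with hE
  have hfm : StronglyMeasurable[G] (fun ω => 1 + s * ((Y ω - E ω) / Δ)) := by
    have : (fun ω => 1 + s * ((Y ω - E ω) / Δ))
        = fun ω => 1 + s * ((Y ω - E ω) * Δ⁻¹) := by
      funext ω; rw [div_eq_mul_inv]
    rw [this]
    exact stronglyMeasurable_const.add
      (((hYm.sub stronglyMeasurable_condExp).mul_const Δ⁻¹).const_mul s)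
  set N : Set Ω := {ω | 1 + s * ((Y ω - E ω) / Δ) ≤ 0} with hN
  have hNmeasG : MeasurableSet[G] N :=
    measurableSet_le hfm.measurable measurable_const
  have hNmeas : MeasurableSet[m0] N := hG _ hNmeasG
  set ε : ℝ := Δ * (1 - s) / s with hε
  have hεpos : 0 < ε := by
    have h1s : 0 < 1 - s := by linarith
    positivity
  have hlow : ∀ᵐ ω ∂P, ω ∈ N → ε ≤ E ω - X ω := by
    filter_upwards [hAY] with ω hω hωN
    have h1 : 1 + s * ((Y ω - E ω) / Δ) ≤ 0 := hωN
    have h2 : -Δ < Y ω - X ω := by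
      have := (lt_div_iff₀ hΔ).mp hω
      linarith
    have hdm : (Y ω - E ω) / Δ * Δ = Y ω - E ω := div_mul_cancel₀ _ hΔ.ne'
    have h1'' : s * ((Y ω - E ω) / Δ) * Δ ≤ -1 * Δ :=
      mul_le_mul_of_nonneg_right (by linarith) hΔ.le
    have h1' : s * (Y ω - E ω) ≤ -Δ := by rw [mul_assoc, hdm] at h1''; linarith
    have hsε : s * ε = Δ * (1 - s) := by rw [hε]; field_simp
    nlinarith [mul_lt_mul_of_pos_left h2 hs0, h1', hsε, hs0]
  have hzero : ∫ ω in N, (E ω - X ω) ∂P = 0 := by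
    have h1 : ∫ ω in N, E ω ∂P = ∫ ω in N, X ω ∂P :=
      setIntegral_condExp hG hXint hNmeasG
    rw [integral_sub integrable_condExp.integrableOn hXint.integrableOn, h1, sub_self]
  have hlb : ε * (P N).toReal ≤ ∫ ω in N, (E ω - X ω) ∂P := by
    have hconst : ∫ _ω in N, ε ∂P = (P N).toReal * ε := by
      rw [setIntegral_const]; simp [smul_eq_mul]; exact Or.inl rfl
    rw [← mul_comm (P N).toReal ε, ← hconst]
    refine integral_mono_ae (integrableOn_const (measure_ne_top _ _))
      (integrable_condExp.sub hXint).integrableOn ?_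
    exact (ae_restrict_iff' hNmeas).mpr hlow
  have hPN : P N = 0 := by
    by_contra h
    have h1 : 0 < (P N).toReal := by
      refine ENNReal.toReal_pos h (measure_ne_top _ _)
    nlinarith [hlb.trans_eq hzero]
  rw [ae_iff]
  convert hPN using 2
  ext ω
  simp [hN, not_lt]

set_option maxHeartbeats 1000000 in
/-- the empirical Freedman-type concentration inequality with the
variance proxy `Σ` given as a minimum over a finite grid `K ⊆ (0,1)`.  With
`C = (1/n) log (|K|/δ)` and
`Σ(ω) = min_{s∈K} [Δ √C (1-s)/s + (Δ/√C) (1/n) ∑_k v (s A_k) / s]`,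
`A_k = (Y k - X k)/Δ > -1` a.s., with probability at least `1 - δ`,
`(1/n) ∑_{k=1}^n (E[X k | ℱ (k-1)] - X k) ≤ Δ C + Σ √C`. -/
theorem stmt_3 {Ω : Type*} {m0 : MeasurableSpace Ω} (P : Measure Ω) [IsProbabilityMeasure P]
    (n : ℕ) (hn : 1 ≤ n)
    (ℱ : Filtration ℕ m0) (X Y : ℕ → Ω → ℝ)
    (hX : ∀ k ∈ Finset.Icc 1 n, StronglyMeasurable[ℱ k] (X k))
    (hY : ∀ k ∈ Finset.Icc 1 n, StronglyMeasurable[ℱ (k - 1)] (Y k))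
    (hXint : ∀ k ∈ Finset.Icc 1 n, Integrable (X k) P)
    (Δ : ℝ) (hΔ : 0 < Δ)
    (hA : ∀ k ∈ Finset.Icc 1 n, ∀ᵐ ω ∂P, (Y k ω - X k ω) / Δ > -1)
    (K : Finset ℝ) (hK : K.Nonempty) (hKsub : ↑K ⊆ Set.Ioo (0 : ℝ) 1)
    (δ : ℝ) (hδ : δ ∈ Set.Ioo (0 : ℝ) 1) :
    ENNReal.ofReal (1 - δ) ≤
      P {ω |
        (1 / (n : ℝ)) * ∑ k ∈ Finset.Icc 1 n, ((P[X k|ℱ (k - 1)]) ω - X k ω) ≤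
          Δ * ((1 / (n : ℝ)) * Real.log (K.card / δ)) +
          (K.inf' hK fun s =>
              Δ * Real.sqrt ((1 / (n : ℝ)) * Real.log (K.card / δ)) * (1 - s) / s +
                Δ / Real.sqrt ((1 / (n : ℝ)) * Real.log (K.card / δ)) *
                  ((1 / (n : ℝ)) *
                    ∑ k ∈ Finset.Icc 1 n, v (s * ((Y k ω - X k ω) / Δ)) / s)) *
            Real.sqrt ((1 / (n : ℝ)) * Real.log (K.card / δ))} := by
  classical
  obtain ⟨hδ0, hδ1⟩ := hδ
  have hn0 : (0:ℝ) < n := by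
    have : 0 < n := hn
    exact_mod_cast this
  have hcard0 : 0 < (K.card : ℝ) := by exact_mod_cast Finset.card_pos.mpr hK
  set c : ℝ := (K.card : ℝ) / δ with hcdef
  have hc0 : 0 < c := div_pos hcard0 hδ0
  have hc1 : 1 < c := by
    rw [hcdef, lt_div_iff₀ hδ0]
    have h1 : (1:ℝ) ≤ K.card := by exact_mod_cast Finset.card_pos.mpr hK
    nlinarith
  set C : ℝ := 1 / (n:ℝ) * Real.log c with hCdef
  have hCpos : 0 < C := by
    rw [hCdef]; exact mul_pos (by positivity) (Real.log_pos hc1)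
  set r : ℝ := Real.sqrt C with hrdef
  have hr0 : 0 < r := Real.sqrt_pos.mpr hCpos
  have hr2 : r * r = C := Real.mul_self_sqrt hCpos.le
  set L : Ω → ℝ :=
    fun ω => 1 / (n : ℝ) * ∑ k ∈ Finset.Icc 1 n, ((P[X k|ℱ (k - 1)]) ω - X k ω) with hLdef
  set F : ℝ → Ω → ℝ := fun s ω =>
    Δ * r * (1 - s) / s + Δ / r *
      (1 / (n : ℝ) * ∑ k ∈ Finset.Icc 1 n, v (s * ((Y k ω - X k ω) / Δ)) / s) with hFdef
  show ENNReal.ofReal (1 - δ) ≤ P {ω | L ω ≤ Δ * C + (K.inf' hK fun s => F s ω) * r}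
  -- measurability preliminaries
  have hXm : ∀ k ∈ Finset.Icc 1 n, Measurable[m0] (X k) :=
    fun k hk => ((hX k hk).mono (ℱ.le k)).measurable
  have hYm : ∀ k ∈ Finset.Icc 1 n, Measurable[m0] (Y k) :=
    fun k hk => ((hY k hk).mono (ℱ.le _)).measurable
  have hEm : ∀ k : ℕ, Measurable[m0] (P[X k|ℱ (k-1)]) :=
    fun k => (stronglyMeasurable_condExp.mono (ℱ.le _)).measurable
  have hvm : Measurable v := by
    have hv : v = fun x => x - Real.log (1 + x) := rfl
    rw [hv]
    exact measurable_id.sub (Real.measurable_log.comp (measurable_const.add measurable_id))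
  have hLm : Measurable[m0] L := by
    simp only [hLdef]
    exact (Finset.measurable_sum _ fun k hk => (hEm k).sub (hXm k hk)).const_mul _
  have hFm : ∀ s ∈ K, Measurable[m0] (F s) := by
    intro s hs
    simp only [hFdef]
    have hsum : Measurable[m0] fun ω =>
        ∑ k ∈ Finset.Icc 1 n, v (s * ((Y k ω - X k ω) / Δ)) / s :=
      Finset.measurable_sum _ fun k hk =>
        (hvm.comp ((((hYm k hk).sub (hXm k hk)).div_const Δ).const_mul s)).div_const s
    exact measurable_const.add ((hsum.const_mul _).const_mul _)
  -- the per-`s` concentration bound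
  have hbad : ∀ s ∈ K, P {ω | ¬ (L ω ≤ Δ * C + F s ω * r)} ≤ ENNReal.ofReal (δ / K.card) := by
    intro s hsK
    obtain ⟨hs0, hs1⟩ := hKsub hsK
    set a : ℕ → Ω → ℝ := fun k ω => 1 + s * ((Y k ω - X k ω) / Δ) with hadef
    set b : ℕ → Ω → ℝ :=
      fun k ω => 1 + s * ((Y k ω - (P[X k|ℱ (k - 1)]) ω) / Δ) with hbdef
    set T : ℕ → Ω → ℝ≥0∞ := fun j ω => ∏ k ∈ Finset.Icc 1 j,
      ENNReal.ofReal (a k ω) * (ENNReal.ofReal (b k ω))⁻¹ with hTdef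
    have haM : ∀ k ∈ Finset.Icc 1 n, Measurable[m0] (a k) := fun k hk =>
      measurable_const.add ((((hYm k hk).sub (hXm k hk)).div_const Δ).const_mul s)
    have hbM : ∀ k ∈ Finset.Icc 1 n, Measurable[m0] (b k) := fun k hk =>
      measurable_const.add ((((hYm k hk).sub (hEm k)).div_const Δ).const_mul s)
    have haMF : ∀ k ∈ Finset.Icc 1 n, Measurable[ℱ k] (a k) := fun k hk =>
      measurable_const.add
        (((((hY k hk).measurable.mono (ℱ.mono (Nat.sub_le k 1)) le_rfl).sub
          (hX k hk).measurable).div_const Δ).const_mul s)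
    have hbMF : ∀ k ∈ Finset.Icc 1 n, Measurable[ℱ (k - 1)] (b k) := fun k hk =>
      measurable_const.add
        ((((hY k hk).measurable.sub stronglyMeasurable_condExp.measurable).div_const
          Δ).const_mul s)
    have hTMF : ∀ j, j ≤ n → Measurable[ℱ j] (T j) := by
      intro j hj
      refine Finset.measurable_prod _ fun k hk => ?_
      obtain ⟨hk1, hkj⟩ := Finset.mem_Icc.mp hk
      have hkn : k ∈ Finset.Icc 1 n := Finset.mem_Icc.mpr ⟨hk1, hkj.trans hj⟩
      exact (((haMF k hkn).mono (ℱ.mono hkj) le_rfl).ennreal_ofReal).mul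
        ((((hbMF k hkn).mono (ℱ.mono ((Nat.sub_le k 1).trans hkj)) le_rfl).ennreal_ofReal).inv)
    have ha0 : ∀ k ∈ Finset.Icc 1 n, ∀ᵐ ω ∂P, 0 < a k ω := by
      intro k hk
      filter_upwards [hA k hk] with ω h
      have h2 := mul_lt_mul_of_pos_left h hs0
      show 0 < 1 + s * ((Y k ω - X k ω) / Δ)
      nlinarith
    have hb0 : ∀ k ∈ Finset.Icc 1 n, ∀ᵐ ω ∂P, 0 < b k ω := fun k hk =>
      b_pos P (ℱ.le (k - 1)) (hXint k hk) (hY k hk) hΔ hs0 hs1 (hA k hk)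
    have hTint : ∀ j, j ≤ n → ∫⁻ ω, T j ω ∂P ≤ 1 := by
      intro j
      induction j with
      | zero => intro _; simp [hTdef]
      | succ j ih =>
        intro hj1
        have hjn : j ≤ n := Nat.le_of_succ_le hj1
        have hmem : j + 1 ∈ Finset.Icc 1 n := Finset.mem_Icc.mpr ⟨Nat.le_add_left 1 j, hj1⟩
        have hTsucc : ∀ ω, T (j + 1) ω = T j ω *
            (ENNReal.ofReal (a (j + 1) ω) * (ENNReal.ofReal (b (j + 1) ω))⁻¹) := by
          intro ω
          exact Finset.prod_Icc_succ_top (Nat.le_add_left 1 j) _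
        set g : Ω → ℝ≥0∞ := fun ω => T j ω * (ENNReal.ofReal (b (j + 1) ω))⁻¹ with hgdef
        have hgM : Measurable[ℱ j] g :=
          (hTMF j hjn).mul ((hbMF (j + 1) hmem).ennreal_ofReal).inv
        have hab : ∀ ω, a (j + 1) ω - b (j + 1) ω
            = (s / Δ) * ((P[X (j + 1)|ℱ j]) ω - X (j + 1) ω) := by
          intro ω
          simp only [hadef, hbdef, Nat.add_sub_cancel]
          field_simp
          ring
        calc ∫⁻ ω, T (j + 1) ω ∂P
            = ∫⁻ ω, g ω * ENNReal.ofReal (a (j + 1) ω) ∂P := by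
              refine lintegral_congr fun ω => ?_
              rw [hTsucc ω]; simp only [hgdef]; ring
        _ = ∫⁻ ω, g ω * ENNReal.ofReal (b (j + 1) ω) ∂P :=
              key_step P (ℱ.le j) hgM (haM _ hmem) (hbM _ hmem)
                ((ha0 _ hmem).mono fun ω h => h.le) ((hb0 _ hmem).mono fun ω h => h.le)
                (hXint _ hmem) (s / Δ) hab
        _ = ∫⁻ ω, T j ω ∂P := by
              refine lintegral_congr_ae ?_
              filter_upwards [hb0 _ hmem] with ω hb
              have hne : ENNReal.ofReal (b (j + 1) ω) ≠ 0 := (ENNReal.ofReal_pos.mpr hb).ne'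
              simp only [hgdef]
              calc T j ω * (ENNReal.ofReal (b (j + 1) ω))⁻¹ * ENNReal.ofReal (b (j + 1) ω)
                  = T j ω * ((ENNReal.ofReal (b (j + 1) ω))⁻¹ *
                      ENNReal.ofReal (b (j + 1) ω)) := by ring
                _ = T j ω := by rw [ENNReal.inv_mul_cancel hne ENNReal.ofReal_ne_top, mul_one]
        _ ≤ 1 := ih hjn
    have hTnM : Measurable[m0] (T n) := (hTMF n le_rfl).mono (ℱ.le n) le_rfl
    have hmark : P {ω | ENNReal.ofReal c ≤ T n ω} ≤ ENNReal.ofReal (δ / K.card) := by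
      have h := mul_meas_ge_le_lintegral₀ (μ := P) hTnM.aemeasurable (ENNReal.ofReal c)
      have h2 : ENNReal.ofReal c * P {ω | ENNReal.ofReal c ≤ T n ω} ≤ 1 :=
        h.trans (hTint n le_rfl)
      have h3 : P {ω | ENNReal.ofReal c ≤ T n ω} ≤ (ENNReal.ofReal c)⁻¹ := by
        rw [ENNReal.le_inv_iff_mul_le]
        rw [mul_comm] at h2; exact h2
      refine h3.trans_eq ?_
      rw [← ENNReal.ofReal_inv_of_pos hc0]
      congr 1
      rw [hcdef, inv_div]
    have hptwise : ∀ᵐ ω ∂P,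
        ¬ (L ω ≤ Δ * C + F s ω * r) → ENNReal.ofReal c ≤ T n ω := by
      have haeA : ∀ᵐ ω ∂P, ∀ k ∈ Finset.Icc 1 n, 0 < a k ω :=
        (Filter.eventually_all_finset _).mpr ha0
      have haeB : ∀ᵐ ω ∂P, ∀ k ∈ Finset.Icc 1 n, 0 < b k ω :=
        (Filter.eventually_all_finset _).mpr hb0
      filter_upwards [haeA, haeB] with ω hA' hB' hbadω
      by_contra hcon
      apply hbadω
      have hTlt : T n ω < ENNReal.ofReal c := not_le.mp hcon
      have hTne : T n ω = ENNReal.ofReal (∏ k ∈ Finset.Icc 1 n, a k ω / b k ω) := by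
        simp only [hTdef]
        rw [ENNReal.ofReal_prod_of_nonneg
          (fun k hk => div_nonneg (hA' k hk).le (hB' k hk).le)]
        refine Finset.prod_congr rfl fun k hk => ?_
        rw [ENNReal.ofReal_div_of_pos (hB' k hk), div_eq_mul_inv]
      have hprodle : ∏ k ∈ Finset.Icc 1 n, a k ω / b k ω ≤ c := by
        rw [hTne] at hTlt
        exact ((ENNReal.ofReal_lt_ofReal_iff hc0).mp hTlt).le
      have hlog := pointwise_log hc0 (fun k => (Y k ω - X k ω) / Δ)
        (fun k => (Y k ω - (P[X k|ℱ (k - 1)]) ω) / Δ)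
        (fun k hk => hA' k hk) (fun k hk => hB' k hk) hprodle
      have hsumAB : ∑ k ∈ Finset.Icc 1 n,
          ((Y k ω - X k ω) / Δ - (Y k ω - (P[X k|ℱ (k - 1)]) ω) / Δ)
          = (1 / Δ) * ∑ k ∈ Finset.Icc 1 n, ((P[X k|ℱ (k - 1)]) ω - X k ω) := by
        rw [Finset.mul_sum]
        refine Finset.sum_congr rfl fun k hk => ?_
        field_simp
        ring
      rw [hsumAB] at hlog
      set S := ∑ k ∈ Finset.Icc 1 n, ((P[X k|ℱ (k - 1)]) ω - X k ω) with hSdef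
      set V := ∑ k ∈ Finset.Icc 1 n, v (s * ((Y k ω - X k ω) / Δ)) with hVdef
      show L ω ≤ Δ * C + F s ω * r
      have hrhs : Δ * C + F s ω * r = 1 / (n : ℝ) * (Δ / s * (Real.log c + V)) := by
        simp only [hFdef]
        have hVs : ∑ k ∈ Finset.Icc 1 n, v (s * ((Y k ω - X k ω) / Δ)) / s = V / s := by
          rw [hVdef, Finset.sum_div]
        have hlogC : Real.log c = (n : ℝ) * C := by
          rw [hCdef]; field_simp
        rw [hVs, hlogC, ← hr2]
        field_simp
        ring
      rw [hrhs]
      have hLω : L ω = 1 / (n : ℝ) * S := by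
        rw [hSdef]
      rw [hLω]
      refine mul_le_mul_of_nonneg_left ?_ (by positivity)
      have hpos : (0:ℝ) < Δ / s := div_pos hΔ hs0
      have hid : Δ / s * (s * (1 / Δ * S)) = S := by
        field_simp
      calc S = Δ / s * (s * (1 / Δ * S)) := hid.symm
      _ ≤ Δ / s * (Real.log c + V) := mul_le_mul_of_nonneg_left hlog hpos.le
    calc P {ω | ¬ (L ω ≤ Δ * C + F s ω * r)}
        ≤ P {ω | ENNReal.ofReal c ≤ T n ω} := by
          refine measure_mono_ae ?_
          filter_upwards [hptwise] with ω himp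
          exact himp
    _ ≤ ENNReal.ofReal (δ / K.card) := hmark
  -- union bound and conclusion
  have hbadU : P (⋃ s ∈ K, {ω | ¬ (L ω ≤ Δ * C + F s ω * r)}) ≤ ENNReal.ofReal δ := by
    calc P (⋃ s ∈ K, {ω | ¬ (L ω ≤ Δ * C + F s ω * r)})
        ≤ ∑ s ∈ K, P {ω | ¬ (L ω ≤ Δ * C + F s ω * r)} := measure_biUnion_finset_le _ _
    _ ≤ ∑ _s ∈ K, ENNReal.ofReal (δ / K.card) := Finset.sum_le_sum hbad
    _ = K.card * ENNReal.ofReal (δ / K.card) := by rw [Finset.sum_const, nsmul_eq_mul]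
    _ = ENNReal.ofReal δ := by
        rw [← ENNReal.ofReal_natCast K.card, ← ENNReal.ofReal_mul hcard0.le]
        congr 1
        rw [mul_comm]
        exact div_mul_cancel₀ δ hcard0.ne'
  have hUm : MeasurableSet (⋃ s ∈ K, {ω | ¬ (L ω ≤ Δ * C + F s ω * r)}) := by
    refine Finset.measurableSet_biUnion _ fun s hs => ?_
    have : {ω | ¬ (L ω ≤ Δ * C + F s ω * r)} = {ω | L ω ≤ Δ * C + F s ω * r}ᶜ := rfl
    rw [this]
    exact (measurableSet_le hLm (measurable_const.add ((hFm s hs).mul_const r))).compl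
  have hsubset : (⋃ s ∈ K, {ω | ¬ (L ω ≤ Δ * C + F s ω * r)})ᶜ ⊆
      {ω | L ω ≤ Δ * C + (K.inf' hK fun s => F s ω) * r} := by
    intro ω hω
    simp only [Set.mem_compl_iff, Set.mem_iUnion, not_exists, Set.mem_setOf_eq, not_not] at hω
    obtain ⟨s₀, hs₀K, hinf⟩ := K.exists_mem_eq_inf' hK (fun t => F t ω)
    show L ω ≤ Δ * C + (K.inf' hK fun s => F s ω) * r
    rw [hinf]
    exact hω s₀ hs₀K
  calc ENNReal.ofReal (1 - δ) = 1 - ENNReal.ofReal δ := by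
        rw [ENNReal.ofReal_sub _ hδ0.le, ENNReal.ofReal_one]
  _ ≤ 1 - P (⋃ s ∈ K, {ω | ¬ (L ω ≤ Δ * C + F s ω * r)}) := tsub_le_tsub_left hbadU 1
  _ = P ((⋃ s ∈ K, {ω | ¬ (L ω ≤ Δ * C + F s ω * r)})ᶜ) := (prob_compl_eq_one_sub hUm).symm
  _ ≤ P {ω | L ω ≤ Δ * C + (K.inf' hK fun s => F s ω) * r} := measure_mono hsubset
end

section
/- For all real x > 0, one has (1+x)·log(1+x) − x·log x ≤ √(2x). -/
private lemma aux_mono (s : ℝ) (hs : 1 ≤ s) : 2 * Real.log s ≤ s - s⁻¹ := by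
  set f : ℝ → ℝ := fun y => y - y⁻¹ - 2 * Real.log y with hf
  have hmono : MonotoneOn f (Set.Ici 1) := by
    apply monotoneOn_of_deriv_nonneg (convex_Ici 1)
    · apply ContinuousOn.sub (ContinuousOn.sub continuousOn_id ?_) ?_
      · exact ContinuousOn.inv₀ continuousOn_id (fun y hy => by
          have h1y : (1:ℝ) ≤ y := hy; positivity)
      · exact continuousOn_const.mul (Real.continuousOn_log.mono (fun y hy => by
          have h1y : (1:ℝ) ≤ y := hy; simp; positivity))
    · intro y hy
      rw [interior_Ici] at hy
      have hy1 : (1:ℝ) < y := hy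
      have hy0 : y ≠ 0 := by positivity
      exact (((hasDerivAt_id y).sub (hasDerivAt_inv hy0)).sub
        ((Real.hasDerivAt_log hy0).const_mul 2)).differentiableAt.differentiableWithinAt
    · intro y hy
      rw [interior_Ici] at hy
      have hy1 : (1:ℝ) < y := hy
      have hy0 : y ≠ 0 := by positivity
      have hd : HasDerivAt f (1 - (-(y^2)⁻¹) - 2 * y⁻¹) y :=
        ((hasDerivAt_id y).sub (hasDerivAt_inv hy0)).sub
          ((Real.hasDerivAt_log hy0).const_mul 2)
      rw [hd.deriv]
      have h2 : (y^2)⁻¹ = y⁻¹ * y⁻¹ := by rw [sq, mul_inv]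
      nlinarith [sq_nonneg (1 - y⁻¹)]
  have h1 : f 1 ≤ f s := hmono (by simp) hs hs
  have h0 : f 1 = 0 := by simp [hf]
  rw [h0] at h1
  simp only [hf] at h1
  linarith

private lemma key (t : ℝ) (ht : 1 ≤ t) : Real.log t ≤ (t - 1) / Real.sqrt t := by
  have ht0 : (0:ℝ) ≤ t := by linarith
  have hs : 1 ≤ Real.sqrt t := by
    rw [show (1:ℝ) = Real.sqrt 1 by simp]; exact Real.sqrt_le_sqrt ht
  have hs0 : (0:ℝ) < Real.sqrt t := by linarith
  have h := aux_mono (Real.sqrt t) hs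
  have hlog : Real.log t = 2 * Real.log (Real.sqrt t) := by
    rw [Real.log_sqrt ht0]; ring
  have hsq : Real.sqrt t ^ 2 = t := Real.sq_sqrt ht0
  rw [hlog, le_div_iff₀ hs0]
  calc 2 * Real.log (Real.sqrt t) * Real.sqrt t
      ≤ (Real.sqrt t - (Real.sqrt t)⁻¹) * Real.sqrt t :=
        mul_le_mul_of_nonneg_right h (le_of_lt hs0)
    _ = t - 1 := by
        rw [sub_mul, inv_mul_cancel₀ (ne_of_gt hs0), ← sq, hsq]

/-- For all real `x > 0`, `(1+x) log (1+x) - x log x ≤ √(2x)`. -/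
theorem stmt_8 : ∀ x : ℝ, 0 < x →
    (1 + x) * Real.log (1 + x) - x * Real.log x ≤ Real.sqrt (2 * x) := by
  intro x hx
  set a := Real.sqrt x with hadef
  set b := Real.sqrt (1 + x) with hbdef
  have ha0 : 0 < a := Real.sqrt_pos.mpr hx
  have ha2 : a ^ 2 = x := Real.sq_sqrt hx.le
  have hb2 : b ^ 2 = 1 + x := Real.sq_sqrt (by linarith)
  have hbn : 0 ≤ b := Real.sqrt_nonneg _
  have hb1 : 1 ≤ b := by nlinarith [sq_nonneg (b - 1), sq_nonneg (b + 1)]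
  have hb0 : 0 < b := by linarith
  -- bound 1 : log (1+x) ≤ x / b
  have h1 : Real.log (1 + x) ≤ x / b := by
    have h := key (1 + x) (by linarith)
    rw [← hbdef] at h
    simpa using h
  -- bound 2 : log (1+x) - log x ≤ 1 / (a*b)
  have h2 : Real.log (1 + x) - Real.log x ≤ 1 / (a * b) := by
    have ht : 1 ≤ (1 + x) / x := by
      rw [le_div_iff₀ hx]; linarith
    have h := key ((1 + x) / x) ht
    rw [Real.log_div (by linarith) (ne_of_gt hx)] at h
    have hsqrt : Real.sqrt ((1 + x) / x) = b / a := by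
      rw [hbdef, hadef, Real.sqrt_div (by linarith : (0:ℝ) ≤ 1 + x)]
    rw [hsqrt] at h
    have heq : ((1 + x) / x - 1) / (b / a) = 1 / (a * b) := by
      field_simp
      nlinarith
    rw [heq] at h
    exact h
  -- sqrt(2x) = sqrt 2 * a
  have hs2 : Real.sqrt (2 * x) = Real.sqrt 2 * a := by
    rw [hadef, Real.sqrt_mul (by norm_num)]
  have hsq2 : Real.sqrt 2 ^ 2 = 2 := Real.sq_sqrt (by norm_num)
  have hsq2n : 0 ≤ Real.sqrt 2 := Real.sqrt_nonneg 2
  -- key algebraic inequality : 1 + a ≤ √2 * b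
  have hsb : (Real.sqrt 2 * b) ^ 2 = 2 * (1 + x) := by rw [mul_pow, hsq2, hb2]
  have h12 : 1 + a ≤ Real.sqrt 2 * b := by
    nlinarith [sq_nonneg (a - 1), hsb,
      show (0:ℝ) < Real.sqrt 2 * b + (1 + a) by positivity]
  have hmain : x * (1 / (a * b)) + x / b ≤ Real.sqrt 2 * a := by
    have heq2 : x * (1 / (a * b)) + x / b = (a + a ^ 2) / b := by
      rw [← ha2]; field_simp
    rw [heq2, div_le_iff₀ hb0]
    nlinarith [mul_le_mul_of_nonneg_left h12 ha0.le]
  calc (1 + x) * Real.log (1 + x) - x * Real.log x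
      = x * (Real.log (1 + x) - Real.log x) + Real.log (1 + x) := by ring
    _ ≤ x * (1 / (a * b)) + x / b :=
        add_le_add (mul_le_mul_of_nonneg_left h2 hx.le) h1
    _ ≤ Real.sqrt 2 * a := hmain
    _ = Real.sqrt (2 * x) := hs2.symm
end

section
/- Let (Ω, 𝓕, (𝓕_k)_{k∈ℕ}, P) be a filtered probability space, let X_1, …, X_n be random variables with X_k 𝓕_k-measurable, and let Y_1, …, Y_n be random variables with Y_k 𝓕_{k−1}-measurable, such that Y_k − X_k > −Δ almost surely for some Δ ≥ 0. Fix t with 0 < t < 1/Δ and define M_k = exp( t·(E[X_k | 𝓕_{k−1}] − X_k) − v(t·(Y_k − X_k)) ). Then E[M_k | 𝓕_{k−1}] ≤ 1 almost surely for each k, and the partial products U_n = ∏_{k=1}^{n} M_k (with U_0 = 1) form a nonnegative supermartingale with respect to (𝓕_k). -/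
open MeasureTheory

open Filter

lemma aux_ae_ge {Ω : Type*} {m m0 : MeasurableSpace Ω} (hm : m ≤ m0)
    (P : Measure Ω) [IsProbabilityMeasure P] {X Y : Ω → ℝ}
    (hXint : Integrable X P) (hYm : StronglyMeasurable[m] Y)
    {Δ : ℝ} (hbd : ∀ᵐ ω ∂P, Y ω - X ω > -Δ) :
    ∀ᵐ ω ∂P, -Δ ≤ Y ω - (P[X|m]) ω := by
  set Z := P[X|m] with hZdef
  have hZm : StronglyMeasurable[m] Z := stronglyMeasurable_condExp
  have hZint : Integrable Z P := integrable_condExp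
  have key : ∀ n : ℕ, P {ω | Y ω - Z ω ≤ -Δ - ((n : ℝ) + 1)⁻¹} = 0 := by
    intro n
    set s : Set Ω := {ω | Y ω - Z ω ≤ -Δ - ((n : ℝ) + 1)⁻¹} with hs
    have hs_m : MeasurableSet[m] s := (hYm.sub hZm).measurable measurableSet_Iic
    have hsM : MeasurableSet[m0] s := hm _ hs_m
    have hIYX : IntegrableOn (fun ω => Y ω - X ω) s P := by
      rw [← integrable_indicator_iff hsM]
      refine Integrable.mono' (((hZint.sub hXint).abs).add
        (integrable_const (|Δ| + |(-Δ - ((n : ℝ) + 1)⁻¹)|))) ?_ ?_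
      · exact (((hYm.mono hm).aestronglyMeasurable.sub hXint.1).indicator hsM)
      · filter_upwards [hbd] with ω hω
        by_cases hmem : ω ∈ s
        · rw [Set.indicator_of_mem hmem]
          have h1 : Y ω - Z ω ≤ -Δ - ((n : ℝ) + 1)⁻¹ := hmem
          have h2 : Y ω - X ω > -Δ := hω
          rw [Real.norm_eq_abs, abs_le, Pi.add_apply, Pi.sub_apply]
          constructor
          · nlinarith [abs_nonneg (Z ω - X ω), abs_nonneg (-Δ - ((n : ℝ) + 1)⁻¹),
              le_abs_self Δ]
          · nlinarith [le_abs_self (Z ω - X ω), le_abs_self (-Δ - ((n : ℝ) + 1)⁻¹),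
              le_abs_self Δ, neg_abs_le Δ]
        · rw [Set.indicator_of_notMem hmem]
          simp only [norm_zero, Pi.add_apply, Pi.sub_apply]
          nlinarith [abs_nonneg (-Δ - ((n : ℝ) + 1)⁻¹), abs_nonneg (Z ω - X ω), abs_nonneg Δ]
    have hIZX : IntegrableOn (fun ω => Z ω - X ω) s P := (hZint.sub hXint).integrableOn
    have hIYZ : IntegrableOn (fun ω => Y ω - Z ω) s P := by
      exact (hIYX.sub hIZX).congr
        (Filter.Eventually.of_forall fun ω => by simp only [Pi.sub_apply]; ring)
    have h1 : -Δ * (P s).toReal ≤ ∫ ω in s, (Y ω - X ω) ∂P := by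
      have := setIntegral_mono_ae_restrict (f := fun _ => -Δ)
        (g := fun ω => Y ω - X ω) (μ := P) (s := s)
        (integrableOn_const (measure_ne_top P s))
        hIYX (ae_restrict_of_ae (hbd.mono fun ω h => le_of_lt h))
      rwa [setIntegral_const, smul_eq_mul, mul_comm] at this
    have h2 : ∫ ω in s, (Z ω - X ω) ∂P = 0 := by
      rw [integral_sub hZint.integrableOn hXint.integrableOn, hZdef,
        setIntegral_condExp hm hXint hs_m, sub_self]
    have h3 : ∫ ω in s, (Y ω - Z ω) ∂P ≤ (-Δ - ((n : ℝ) + 1)⁻¹) * (P s).toReal := by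
      have := setIntegral_mono_on hIYZ
        (integrableOn_const (measure_ne_top P s))
        hsM (fun ω hω => hω)
      rwa [setIntegral_const, smul_eq_mul, mul_comm] at this
    have h4 : ∫ ω in s, (Y ω - X ω) ∂P
        = (∫ ω in s, (Y ω - Z ω) ∂P) + ∫ ω in s, (Z ω - X ω) ∂P := by
      rw [← integral_add hIYZ hIZX]
      apply integral_congr_ae
      filter_upwards with ω using by ring
    have hp : (0:ℝ) ≤ (P s).toReal := ENNReal.toReal_nonneg
    have hinv : (0:ℝ) < ((n : ℝ) + 1)⁻¹ := by positivity
    have h5 : ((n : ℝ) + 1)⁻¹ * (P s).toReal ≤ 0 := by nlinarith [h1, h2, h3, h4]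
    have h6 : ((n : ℝ) + 1)⁻¹ * (P s).toReal = 0 :=
      le_antisymm h5 (mul_nonneg hinv.le hp)
    have h7 : (P s).toReal = 0 := by
      rcases mul_eq_zero.mp h6 with h | h
      · exact absurd h (ne_of_gt hinv)
      · exact h
    exact ((ENNReal.toReal_eq_zero_iff _).mp h7).resolve_right (measure_ne_top P s)
  have hnull : P {ω | Y ω - Z ω < -Δ} = 0 := by
    refine measure_mono_null (fun ω hω => ?_) (measure_iUnion_null fun n => key n)
    have hpos : (0:ℝ) < -Δ - (Y ω - Z ω) := by
      have : Y ω - Z ω < -Δ := hω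
      linarith
    obtain ⟨n, hn⟩ := exists_nat_one_div_lt hpos
    refine Set.mem_iUnion.2 ⟨n, ?_⟩
    simp only [Set.mem_setOf_eq]
    rw [one_div] at hn
    linarith
  rw [ae_iff]
  have : {ω | ¬ -Δ ≤ Y ω - Z ω} = {ω | Y ω - Z ω < -Δ} := by
    ext ω; simp only [Set.mem_setOf_eq, not_le]
  rw [this]
  exact hnull

lemma step_lemma {Ω : Type*} {m m0 : MeasurableSpace Ω} (hm : m ≤ m0)
    (P : Measure Ω) [IsProbabilityMeasure P] {X Y : Ω → ℝ}
    (hXint : Integrable X P) (hYm : StronglyMeasurable[m] Y)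
    {Δ t : ℝ} (hΔ : 0 ≤ Δ) (ht : 0 < t) (htΔ : t * Δ < 1)
    (hbd : ∀ᵐ ω ∂P, Y ω - X ω > -Δ) :
    Integrable (fun ω => Real.exp (t * ((P[X|m]) ω - X ω) - v (t * (Y ω - X ω)))) P ∧
      P[fun ω => Real.exp (t * ((P[X|m]) ω - X ω) - v (t * (Y ω - X ω)))|m]
        ≤ᵐ[P] fun _ => 1 := by
  have hZm : StronglyMeasurable[m] (P[X|m]) := stronglyMeasurable_condExp
  have hZint : Integrable (P[X|m]) P := integrable_condExp
  set Z := P[X|m] with hZdef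
  have hA : ∀ᵐ ω ∂P, -Δ ≤ Y ω - Z ω := aux_ae_ge hm P hXint hYm hbd
  set M : Ω → ℝ := fun ω => Real.exp (t * (Z ω - X ω) - v (t * (Y ω - X ω))) with hM
  set G : Ω → ℝ := fun ω => Real.exp (t * (Z ω - Y ω)) * (1 + t * (Y ω - Z ω)) with hG
  set W : Ω → ℝ := fun ω => t * (Z ω - X ω) with hW
  set E : Ω → ℝ := fun ω => Real.exp (t * (Z ω - Y ω)) with hE
  have hWint : Integrable W P := (hZint.sub hXint).const_mul t
  have hEm : StronglyMeasurable[m] E :=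
    Real.continuous_exp.comp_stronglyMeasurable ((hZm.sub hYm).const_mul t)
  have hGm : StronglyMeasurable[m] G :=
    hEm.mul (stronglyMeasurable_const.add ((hYm.sub hZm).const_mul t))
  -- decomposition
  have hdecomp : M =ᵐ[P] fun ω => G ω + E ω * W ω := by
    filter_upwards [hbd] with ω hω
    have h1 : (0:ℝ) < 1 + t * (Y ω - X ω) := by
      have h2 := mul_lt_mul_of_pos_left hω ht
      have : -(t * Δ) < t * (Y ω - X ω) := by
        rw [mul_neg] at h2; linarith
      linarith
    have e1 : t * (Z ω - X ω) - v (t * (Y ω - X ω))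
        = t * (Z ω - Y ω) + Real.log (1 + t * (Y ω - X ω)) := by
      simp only [v]; ring
    show Real.exp _ = _
    rw [e1, Real.exp_add, Real.exp_log h1]
    simp only [hG, hE, hW]
    ring
  -- bounds on G
  have hGbd : ∀ᵐ ω ∂P, 0 ≤ G ω ∧ G ω ≤ 1 := by
    filter_upwards [hA] with ω hω
    have ha : -(t * Δ) ≤ t * (Y ω - Z ω) := by
      have := mul_le_mul_of_nonneg_left hω ht.le
      rw [mul_neg] at this; linarith
    constructor
    · have : (0:ℝ) < 1 + t * (Y ω - Z ω) := by linarith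
      positivity
    · have h2 : 1 + t * (Y ω - Z ω) ≤ Real.exp (t * (Y ω - Z ω)) := by
        linarith [Real.add_one_le_exp (t * (Y ω - Z ω))]
      have h3 : Real.exp (t * (Z ω - Y ω)) * (1 + t * (Y ω - Z ω))
          ≤ Real.exp (t * (Z ω - Y ω)) * Real.exp (t * (Y ω - Z ω)) := by
        apply mul_le_mul_of_nonneg_left h2 (Real.exp_nonneg _)
      have h4 : t * (Z ω - Y ω) + t * (Y ω - Z ω) = 0 := by ring
      rw [← Real.exp_add, h4, Real.exp_zero] at h3
      exact h3
  have hGint : Integrable G P := by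
    refine Integrable.mono' (integrable_const 1) (hGm.mono hm).aestronglyMeasurable ?_
    filter_upwards [hGbd] with ω hω
    rw [Real.norm_eq_abs, abs_of_nonneg hω.1]; exact hω.2
  have hEbd : ∀ᵐ ω ∂P, E ω ≤ Real.exp (t * Δ) := by
    filter_upwards [hA] with ω hω
    apply Real.exp_le_exp.2
    have := mul_le_mul_of_nonneg_left hω ht.le
    rw [mul_neg] at this
    nlinarith
  have hEWint : Integrable (fun ω => E ω * W ω) P := by
    refine Integrable.mono' (hWint.abs.const_mul (Real.exp (t * Δ)))
      ((hEm.mono hm).aestronglyMeasurable.mul hWint.1) ?_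
    filter_upwards [hEbd] with ω hω
    rw [Real.norm_eq_abs, abs_mul, abs_of_pos (Real.exp_pos _)]
    exact mul_le_mul_of_nonneg_right hω (abs_nonneg _)
  have hMint : Integrable M P := (hGint.add hEWint).congr (by
    filter_upwards [hdecomp] with ω hω
    simp only [Pi.add_apply]
    exact hω.symm)
  refine ⟨hMint, ?_⟩
  -- conditional expectation computation
  have c1 : P[M|m] =ᵐ[P] P[fun ω => G ω + E ω * W ω|m] := condExp_congr_ae hdecomp
  have c2 : P[fun ω => G ω + E ω * W ω|m]
      =ᵐ[P] P[G|m] + P[fun ω => E ω * W ω|m] := condExp_add hGint hEWint m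
  have c3 : P[G|m] = G := condExp_of_stronglyMeasurable hm hGm hGint
  have c4 : P[fun ω => E ω * W ω|m] =ᵐ[P] E * P[W|m] :=
    condExp_mul_of_stronglyMeasurable_left hEm hEWint hWint
  have c5 : P[W|m] =ᵐ[P] fun _ => 0 := by
    have h5a : P[fun ω => Z ω - X ω|m] =ᵐ[P] P[Z|m] - P[X|m] := condExp_sub hZint hXint m
    have h5b : P[Z|m] = Z := condExp_of_stronglyMeasurable hm hZm hZint
    have h5c : W = t • fun ω => Z ω - X ω := by
      funext ω
      show t * (Z ω - X ω) = (t • fun ω => Z ω - X ω) ω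
      simp [smul_eq_mul]
    calc P[W|m] =ᵐ[P] t • P[fun ω => Z ω - X ω|m] := by
          rw [h5c]; exact condExp_smul t _ m
      _ =ᵐ[P] fun _ => 0 := by
          filter_upwards [h5a] with ω hω
          simp only [Pi.smul_apply, smul_eq_mul]
          rw [hω]
          rw [Pi.sub_apply, h5b]
          simp [hZdef]
  calc P[M|m] =ᵐ[P] P[G|m] + P[fun ω => E ω * W ω|m] := c1.trans c2
    _ ≤ᵐ[P] fun _ => 1 := by
        filter_upwards [c4, c5, hGbd] with ω h4 h5 hGω
        simp only [Pi.add_apply, c3, h4, Pi.mul_apply, h5, mul_zero, add_zero]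
        exact hGω.2

lemma mul_step {Ω : Type*} {m m0 : MeasurableSpace Ω} (hm : m ≤ m0)
    (P : Measure Ω) [IsProbabilityMeasure P] {U M : Ω → ℝ}
    (hUm : StronglyMeasurable[m] U) (hUint : Integrable U P)
    (hUnn : ∀ ω, 0 ≤ U ω) (hMint : Integrable M P)
    (hMnn : ∀ ω, 0 ≤ M ω) (hcond : P[M|m] ≤ᵐ[P] fun _ => 1) :
    Integrable (fun ω => U ω * M ω) P ∧
      P[fun ω => U ω * M ω|m] ≤ᵐ[P] U := by
  have hMm : AEStronglyMeasurable M P := hMint.1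
  -- truncations
  set UK : ℕ → Ω → ℝ := fun K ω => min (U ω) K with hUK
  have hUKm : ∀ K, StronglyMeasurable[m] (UK K) :=
    fun K => (hUm.measurable.min measurable_const).stronglyMeasurable
  have hUKnn : ∀ K ω, 0 ≤ UK K ω := fun K ω => le_min (hUnn ω) (Nat.cast_nonneg K)
  have hUKle : ∀ K ω, UK K ω ≤ U ω := fun K ω => min_le_left _ _
  have hUKint : ∀ K, Integrable (UK K) P := by
    intro K
    refine hUint.mono ((hUKm K).mono hm).aestronglyMeasurable ?_
    filter_upwards with ω
    rw [Real.norm_eq_abs, Real.norm_eq_abs, abs_of_nonneg (hUKnn K ω)]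
    exact le_trans (hUKle K ω) (le_abs_self _)
  have hUKMint : ∀ K, Integrable (fun ω => UK K ω * M ω) P := by
    intro K
    refine hMint.bdd_mul ((hUKm K).mono hm).aestronglyMeasurable (c := K) (Filter.Eventually.of_forall fun ω => ?_)
    rw [Real.norm_eq_abs, abs_of_nonneg (hUKnn K ω)]
    exact min_le_right _ _
  have hpull : ∀ K, P[fun ω => UK K ω * M ω|m] =ᵐ[P] fun ω => UK K ω * (P[M|m]) ω := by
    intro K
    have h := condExp_mul_of_stronglyMeasurable_left (hUKm K) (μ := P) (g := M) ?_ hMint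
    · exact h.trans (Filter.Eventually.of_forall fun ω => by simp [Pi.mul_apply])
    · exact (hUKMint K).congr (Filter.Eventually.of_forall fun ω => by simp [Pi.mul_apply])
  have hint1 : ∀ K, ∫ ω, UK K ω * M ω ∂P ≤ ∫ ω, U ω ∂P := by
    intro K
    have e1 : ∫ ω, UK K ω * M ω ∂P = ∫ ω, (P[fun ω => UK K ω * M ω|m]) ω ∂P :=
      (integral_condExp hm).symm
    have e2 : ∫ ω, (P[fun ω => UK K ω * M ω|m]) ω ∂P
        = ∫ ω, UK K ω * (P[M|m]) ω ∂P := integral_congr_ae (hpull K)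
    have e3 : ∫ ω, UK K ω * (P[M|m]) ω ∂P ≤ ∫ ω, UK K ω ∂P := by
      refine integral_mono_ae (integrable_condExp.congr (hpull K)) (hUKint K) ?_
      filter_upwards [hcond] with ω hω
      exact mul_le_of_le_one_right (hUKnn K ω) hω
    have e4 : ∫ ω, UK K ω ∂P ≤ ∫ ω, U ω ∂P :=
      integral_mono (hUKint K) hUint (fun ω => hUKle K ω)
    linarith [e1, e2, e3, e4]
  -- lintegral bound
  have hsup : ∀ ω, (⨆ K : ℕ, ENNReal.ofReal (UK K ω * M ω)) = ENNReal.ofReal (U ω * M ω) := by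
    intro ω
    apply le_antisymm
    · exact iSup_le fun K => ENNReal.ofReal_le_ofReal
        (mul_le_mul_of_nonneg_right (hUKle K ω) (hMnn ω))
    · refine le_trans (le_of_eq ?_) (le_iSup _ (Nat.ceil (U ω)))
      congr 1
      rw [hUK]
      simp only
      rw [min_eq_left (Nat.le_ceil (U ω))]
  have hlin : ∫⁻ ω, ENNReal.ofReal (U ω * M ω) ∂P ≤ ENNReal.ofReal (∫ ω, U ω ∂P) := by
    have hmono : ∀ᵐ ω ∂P, Monotone fun K : ℕ => ENNReal.ofReal (UK K ω * M ω) := by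
      filter_upwards with ω K L hKL
      apply ENNReal.ofReal_le_ofReal
      apply mul_le_mul_of_nonneg_right _ (hMnn ω)
      exact min_le_min le_rfl (Nat.cast_le.2 hKL)
    have hmeas : ∀ K : ℕ, AEMeasurable (fun ω => ENNReal.ofReal (UK K ω * M ω)) P := by
      intro K
      exact ENNReal.measurable_ofReal.comp_aemeasurable
        ((((hUKm K).mono hm).measurable.aemeasurable).mul hMm.aemeasurable)
    calc ∫⁻ ω, ENNReal.ofReal (U ω * M ω) ∂P
        = ∫⁻ ω, ⨆ K : ℕ, ENNReal.ofReal (UK K ω * M ω) ∂P := by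
          apply lintegral_congr; intro ω; exact (hsup ω).symm
      _ = ⨆ K : ℕ, ∫⁻ ω, ENNReal.ofReal (UK K ω * M ω) ∂P := lintegral_iSup' hmeas hmono
      _ ≤ ENNReal.ofReal (∫ ω, U ω ∂P) := by
          refine iSup_le fun K => ?_
          rw [← ofReal_integral_eq_lintegral_ofReal (hUKMint K)
            (Filter.Eventually.of_forall fun ω => mul_nonneg (hUKnn K ω) (hMnn ω))]
          exact ENNReal.ofReal_le_ofReal (hint1 K)
  have hUMint : Integrable (fun ω => U ω * M ω) P := by
    refine ⟨(hUm.mono hm).aestronglyMeasurable.mul hMm, ?_⟩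
    rw [hasFiniteIntegral_iff_ofReal
      (Filter.Eventually.of_forall fun ω => mul_nonneg (hUnn ω) (hMnn ω))]
    exact lt_of_le_of_lt hlin ENNReal.ofReal_lt_top
  refine ⟨hUMint, ?_⟩
  have hpull' : P[fun ω => U ω * M ω|m] =ᵐ[P] fun ω => U ω * (P[M|m]) ω := by
    have h := condExp_mul_of_stronglyMeasurable_left hUm (μ := P) (g := M) ?_ hMint
    · exact h.trans (Filter.Eventually.of_forall fun ω => by simp [Pi.mul_apply])
    · exact hUMint.congr (Filter.Eventually.of_forall fun ω => by simp [Pi.mul_apply])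
  filter_upwards [hpull', hcond] with ω h1 h2
  rw [h1]
  exact mul_le_of_le_one_right (hUnn ω) h2


/-- with `X k` being `ℱ k`-measurable and integrable, `Y k` being
`ℱ (k-1)`-measurable, `Y k - X k > -Δ` a.s. and `0 < t < 1/Δ` (encoded `t Δ < 1`),
the variables `M k = exp (t (E[X k | ℱ (k-1)] - X k) - v (t (Y k - X k)))` satisfy
`E[M k | ℱ (k-1)] ≤ 1` a.s., and the partial products `U n = ∏_{k=1}^n M k`
(with `U 0 = 1`) form a nonnegative supermartingale. -/
theorem stmt_16 {Ω : Type*} {m0 : MeasurableSpace Ω} (P : Measure Ω) [IsProbabilityMeasure P]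
    (ℱ : Filtration ℕ m0) (X Y : ℕ → Ω → ℝ)
    (hX : ∀ k, 1 ≤ k → StronglyMeasurable[ℱ k] (X k))
    (hY : ∀ k, 1 ≤ k → StronglyMeasurable[ℱ (k - 1)] (Y k))
    (hXint : ∀ k, 1 ≤ k → Integrable (X k) P)
    (Δ : ℝ) (hΔ : 0 ≤ Δ)
    (hbd : ∀ k, 1 ≤ k → ∀ᵐ ω ∂P, Y k ω - X k ω > -Δ)
    (t : ℝ) (ht : 0 < t) (htΔ : t * Δ < 1) :
    (∀ k, 1 ≤ k →
      (P[fun ω => Real.exp (t * ((P[X k|ℱ (k - 1)]) ω - X k ω) - v (t * (Y k ω - X k ω)))|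
          ℱ (k - 1)]) ≤ᵐ[P] fun _ => 1) ∧
    (∀ n ω, (0 : ℝ) ≤
      ∏ k ∈ Finset.Icc 1 n,
        Real.exp (t * ((P[X k|ℱ (k - 1)]) ω - X k ω) - v (t * (Y k ω - X k ω)))) ∧
    (∀ ω, ∏ k ∈ Finset.Icc 1 0,
        Real.exp (t * ((P[X k|ℱ (k - 1)]) ω - X k ω) - v (t * (Y k ω - X k ω))) = 1) ∧
    Supermartingale
      (fun n ω =>
        ∏ k ∈ Finset.Icc 1 n,
          Real.exp (t * ((P[X k|ℱ (k - 1)]) ω - X k ω) - v (t * (Y k ω - X k ω))))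
      ℱ P := by
  set f : ℕ → Ω → ℝ := fun k ω =>
    Real.exp (t * ((P[X k|ℱ (k - 1)]) ω - X k ω) - v (t * (Y k ω - X k ω))) with hf
  have hcond : ∀ k, 1 ≤ k → Integrable (f k) P ∧ P[f k|ℱ (k - 1)] ≤ᵐ[P] fun _ => 1 :=
    fun k hk => step_lemma (ℱ.le (k - 1)) P (hXint k hk) (hY k hk) hΔ ht htΔ (hbd k hk)
  have hMmeas : ∀ k n, 1 ≤ k → k ≤ n → Measurable[ℱ n] (f k) := by
    intro k n hk hkn
    have hk1n : k - 1 ≤ n := le_trans (Nat.sub_le k 1) hkn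
    have hZ : Measurable[ℱ n] (P[X k|ℱ (k - 1)]) :=
      (stronglyMeasurable_condExp.mono (ℱ.mono hk1n)).measurable
    have hXk : Measurable[ℱ n] (X k) := ((hX k hk).mono (ℱ.mono hkn)).measurable
    have hYk : Measurable[ℱ n] (Y k) := ((hY k hk).mono (ℱ.mono hk1n)).measurable
    have : f k = fun ω => Real.exp (t * ((P[X k|ℱ (k - 1)]) ω - X k ω) -
        (t * (Y k ω - X k ω) - Real.log (1 + t * (Y k ω - X k ω)))) := by
      funext ω; simp only [hf, v]
    rw [this]
    exact Real.measurable_exp.comp (((hZ.sub hXk).const_mul t).sub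
      (((hYk.sub hXk).const_mul t).sub
        (Real.measurable_log.comp (measurable_const.add ((hYk.sub hXk).const_mul t)))))
  have hadp : ∀ n, StronglyMeasurable[ℱ n] (fun ω => ∏ k ∈ Finset.Icc 1 n, f k ω) := by
    intro n
    apply Measurable.stronglyMeasurable
    apply Finset.measurable_prod
    intro k hk
    exact hMmeas k n (Finset.mem_Icc.mp hk).1 (Finset.mem_Icc.mp hk).2
  have hnn : ∀ n ω, (0:ℝ) ≤ ∏ k ∈ Finset.Icc 1 n, f k ω :=
    fun n ω => Finset.prod_nonneg fun k _ => (Real.exp_pos _).le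
  have hzero : ∀ ω : Ω, ∏ k ∈ Finset.Icc 1 0, f k ω = 1 := by
    intro ω
    rw [show Finset.Icc 1 0 = (∅ : Finset ℕ) from Finset.Icc_eq_empty (by omega),
      Finset.prod_empty]
  have hsucc : ∀ n, (fun ω => ∏ k ∈ Finset.Icc 1 (n + 1), f k ω)
      = fun ω => (∏ k ∈ Finset.Icc 1 n, f k ω) * f (n + 1) ω := by
    intro n; funext ω
    exact Finset.prod_Icc_succ_top (Nat.le_add_left 1 n) _
  have hcondn : ∀ n : ℕ, P[f (n + 1)|ℱ n] ≤ᵐ[P] fun _ => 1 := by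
    intro n
    have h := (hcond (n + 1) (Nat.le_add_left 1 n)).2
    simpa using h
  have hint : ∀ n, Integrable (fun ω => ∏ k ∈ Finset.Icc 1 n, f k ω) P := by
    intro n
    induction n with
    | zero =>
      have : (fun ω => ∏ k ∈ Finset.Icc 1 0, f k ω) = fun _ => (1:ℝ) := funext hzero
      rw [this]; exact integrable_const 1
    | succ n ih =>
      rw [hsucc n]
      exact (mul_step (ℱ.le n) P (hadp n) ih (hnn n) (hcond (n + 1) (Nat.le_add_left 1 n)).1
        (fun ω => (Real.exp_pos _).le) (hcondn n)).1
  have hstep : ∀ n : ℕ, P[fun ω => ∏ k ∈ Finset.Icc 1 (n + 1), f k ω|ℱ n]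
      ≤ᵐ[P] fun ω => ∏ k ∈ Finset.Icc 1 n, f k ω := by
    intro n
    rw [hsucc n]
    exact (mul_step (ℱ.le n) P (hadp n) (hint n) (hnn n) (hcond (n + 1) (Nat.le_add_left 1 n)).1
      (fun ω => (Real.exp_pos _).le) (hcondn n)).2
  exact ⟨fun k hk => (hcond k hk).2, hnn, hzero,
    supermartingale_nat (fun n => hadp n) hint hstep⟩
end
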